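/- arXiv:1807.07035 — 4 statements merged into one kernel-verified Lean document; each statement's English description precedes it below -/
import Mathlib

section
/- If Γ ⊂ ℝⁿ is a d-dimensional Ahlfors regular set with d < n−1, then Ω = ℝⁿ \ Γ satisfies the corkscrew condition: there exists C₁ > 0, depending only on the AR constant C₀, n, and d, such that for every x ∈ Γ and every 0 < r < diam(Γ) there is a point A ∈ Ω ∩ B(x,r) with B(A, C₁⁻¹ r) ⊂ Ω. -/
/-!
Suppose every ball `B(A, s)` with `A ∈ B(x, r)` meets `Γ`, where `s = r / C₁`. Take a
maximal `4s`-separated subset of `Γ ∩ B(x, r/2 + s)`. The `5s`-balls around its points cover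
`B(x, r/2)`, so comparing Lebesgue measures it has at least `(C₁/10)ⁿ` points. The `2s`-balls
around its points are disjoint, lie in `B(x, r)`, and each carries `H^d`-mass at least
`C₀⁻¹ (2s)^d` of `Γ`, while `Γ ∩ B(x, r)` has mass at most `C₀ r^d`; so it has at most
`C₀² (C₁/2)^d` points. As `d < n`, the two bounds are incompatible once `C₁` is large.
-/

open MeasureTheory Metric Set Function
open scoped ENNReal NNReal

namespace Metric

variable {X : Type*} [PseudoMetricSpace X]

theorem subset_thickening_of_forall_not_ball_subset_compl {Γ U : Set X} {ρ : ℝ} (hρ : 0 < ρ)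
    (h : ∀ A ∈ Γᶜ ∩ U, ¬ball A ρ ⊆ Γᶜ) : U ⊆ thickening ρ Γ := by
  intro A hA
  by_cases hAΓ : A ∈ Γ
  · exact self_subset_thickening hρ Γ hAΓ
  · obtain ⟨y, hyA, hyΓ⟩ := not_subset.1 (h A ⟨hAΓ, hA⟩)
    exact mem_thickening_iff.2 ⟨y, not_not.1 hyΓ, by rwa [dist_comm]⟩

variable [MeasurableSpace X] [OpensMeasurableSpace X]

theorem IsSeparated.encard_mul_le_measure_thickening (μ : Measure X) {C : Set X}
    {ρ : ℝ≥0} {m : ℝ≥0∞} (hC : IsSeparated ((2 * ρ : ℝ≥0) : ℝ≥0∞) C)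
    (hm : ∀ c ∈ C, m ≤ μ (ball c ρ)) :
    C.encard * m ≤ μ (thickening ρ C) := by
  have hdisj : Pairwise (Disjoint on fun c : C ↦ ball (c : X) ρ) := by
    intro c c' hcc'
    refine ball_disjoint_ball ?_
    have : ((2 * ρ : ℝ≥0) : ℝ≥0∞) < edist (c : X) c' :=
      hC c.2 c'.2 (Subtype.coe_injective.ne hcc')
    rw [edist_dist, ← ENNReal.ofReal_coe_nnreal, ENNReal.ofReal_lt_ofReal_iff'] at this
    push_cast at this
    linarith [this.1]
  calc (C.encard : ℝ≥0∞) * m = ∑' _ : C, m := (ENNReal.tsum_set_const C m).symm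
    _ ≤ ∑' c : C, μ (ball c ρ) := ENNReal.tsum_le_tsum fun c ↦ hm c c.2
    _ ≤ μ (⋃ c : C, ball (c : X) ρ) :=
      tsum_meas_le_meas_iUnion_of_disjoint μ (fun _ ↦ measurableSet_ball) hdisj
    _ ≤ μ (thickening ρ C) :=
      measure_mono (iUnion_subset fun c ↦ ball_subset_thickening c.2 _)

theorem packingNumber_mul_le_measure_thickening (μ : Measure X) {Y : Set X} {ρ : ℝ≥0}
    {m : ℝ≥0∞} (hm : ∀ y ∈ Y, m ≤ μ (ball y ρ)) :
    packingNumber (2 * ρ) Y * m ≤ μ (thickening ρ Y) := by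
  simp only [packingNumber, ENat.toENNReal_iSup, ENNReal.iSup_mul, iSup_le_iff]
  intro C hCY hC
  exact (hC.encard_mul_le_measure_thickening μ fun c hc ↦ hm c (hCY hc)).trans
    (measure_mono (thickening_subset_of_subset _ hCY))

theorem measure_thickening_le_packingNumber_mul {E : Type*} [NormedAddCommGroup E]
    [MeasurableSpace E] [BorelSpace E] (μ : Measure E) [μ.IsAddHaarMeasure] (Y : Set E)
    (ε : ℝ≥0) {s : ℝ} (hs : 0 < s) :
    μ (thickening s Y) ≤ packingNumber ε Y * μ (ball 0 (ε + s)) := by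
  by_cases hN : packingNumber ε Y = ⊤
  · rw [hN, ENat.toENNReal_top, ENNReal.top_mul (measure_ball_pos μ 0 (by positivity)).ne']
    exact le_top
  set S := maximalSeparatedSet ε Y
  have hS : S.Finite := by
    rw [← Set.encard_ne_top_iff, encard_maximalSeparatedSet hN]; exact hN
  have hcover : thickening s Y ⊆ ⋃ f ∈ S, ball f (ε + s) := by
    intro z hz
    obtain ⟨y, hyY, hzy⟩ := mem_thickening_iff.1 hz
    obtain ⟨f, hfS, hyf⟩ := mem_iUnion₂.1 (isCover_iff_subset_iUnion_closedBall.1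
      (isCover_maximalSeparatedSet hN) hyY)
    refine mem_iUnion₂.2 ⟨f, hfS, mem_ball.2 ?_⟩
    linarith [dist_triangle z y f, mem_closedBall.1 hyf, mem_ball.1 hzy]
  calc μ (thickening s Y) ≤ μ (⋃ f ∈ S, ball f (ε + s)) := measure_mono hcover
    _ ≤ ∑' f : S, μ (ball f (ε + s)) := measure_biUnion_le μ hS.countable _
    _ = packingNumber ε Y * μ (ball 0 (ε + s)) := by
      simp_rw [Measure.addHaar_ball_center μ _ (ε + s)]
      rw [ENNReal.tsum_set_const, encard_maximalSeparatedSet hN]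

end Metric

open Module in
theorem ofReal_pow_finrank_mul_le_of_ball_subset_thickening {E : Type*} [NormedAddCommGroup E]
    [NormedSpace ℝ E] [FiniteDimensional ℝ E] [MeasurableSpace E] [BorelSpace E]
    (ν : Measure E) {Γ : Set E} {x : E} {r : ℝ} {s : ℝ≥0} {m : ℝ≥0∞} (hs : 0 < s)
    (hsr : 6 * s ≤ r) (hdense : ball x r ⊆ thickening s Γ)
    (hm : ∀ y ∈ Γ ∩ ball x r, m ≤ ν (ball y (2 * s))) :
    ENNReal.ofReal ((r / 2) ^ finrank ℝ E) * m ≤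
      ENNReal.ofReal ((5 * s) ^ finrank ℝ E) * ν (ball x r) := by
  let μ : Measure E := Measure.addHaar
  have hs' : (0 : ℝ) < s := hs
  set Y := Γ ∩ ball x (r / 2 + s)
  have hY : ball x (r / 2) ⊆ thickening s Y := by
    intro z hz
    obtain ⟨y, hyΓ, hzy⟩ := mem_thickening_iff.1 (hdense (ball_subset_ball (by linarith) hz))
    refine mem_thickening_iff.2 ⟨y, ⟨hyΓ, mem_ball.2 ?_⟩, hzy⟩
    linarith [dist_triangle_left y x z, mem_ball.1 hz]
  have hYx : thickening (2 * s : ℝ≥0) Y ⊆ ball x r := by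
    intro z hz
    obtain ⟨y, hyY, hzy⟩ := mem_thickening_iff.1 hz
    push_cast at hzy
    exact mem_ball.2 (by linarith [dist_triangle z y x, mem_ball.1 hyY.2])
  have hcover : ENNReal.ofReal ((r / 2) ^ finrank ℝ E) ≤
      packingNumber (4 * s) Y * ENNReal.ofReal ((5 * s) ^ finrank ℝ E) := by
    have h := (measure_mono hY).trans (measure_thickening_le_packingNumber_mul μ Y (4 * s) hs')
    rw [show ((4 * s : ℝ≥0) : ℝ) + s = 5 * s by push_cast; ring,
      Measure.addHaar_ball_of_pos μ 0 (show (0 : ℝ) < 5 * s by positivity),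
      Measure.addHaar_ball_of_pos μ x (by linarith), ← mul_assoc,
      ENNReal.mul_le_mul_iff_left (measure_ball_pos μ 0 one_pos).ne'
        measure_ball_lt_top.ne] at h
    exact h
  have hpack : packingNumber (4 * s) Y * m ≤ ν (ball x r) := by
    rw [show (4 * s : ℝ≥0) = 2 * (2 * s) by ring]
    refine (packingNumber_mul_le_measure_thickening ν fun y hy ↦ ?_).trans (measure_mono hYx)
    exact_mod_cast hm y ⟨hy.1, ball_subset_ball (by linarith) hy.2⟩
  calc ENNReal.ofReal ((r / 2) ^ finrank ℝ E) * m
      ≤ packingNumber (4 * s) Y * ENNReal.ofReal ((5 * s) ^ finrank ℝ E) * m := by gcongr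
    _ = ENNReal.ofReal ((5 * s) ^ finrank ℝ E) * (packingNumber (4 * s) Y * m) := by ring
    _ ≤ ENNReal.ofReal ((5 * s) ^ finrank ℝ E) * ν (ball x r) := by gcongr

theorem five_mul_pow_mul_rpow_lt {n : ℕ} {d C₀ t s : ℝ} (hC₀ : 0 < C₀) (ht : 0 < t)
    (hs : 0 < s) (ht_large : 10 ^ n * C₀ ^ 2 < t ^ ((n : ℝ) - d) * 2 ^ d) :
    (5 * s) ^ n * (C₀ * (t * s) ^ d) < (t * s / 2) ^ n * (C₀⁻¹ * (2 * s) ^ d) := by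
  have htn : t ^ n = t ^ ((n : ℝ) - d) * t ^ d := by
    rw [← Real.rpow_add ht, sub_add_cancel, Real.rpow_natCast]
  have h10 : (10 : ℝ) ^ n = 2 ^ n * 5 ^ n := by rw [← mul_pow]; norm_num
  rw [Real.mul_rpow ht.le hs.le, Real.mul_rpow zero_le_two hs.le, div_pow, mul_pow, mul_pow, htn]
  have hc : 0 < t ^ d * s ^ d * s ^ n / (2 ^ n * C₀) := by positivity
  calc (5 ^ n * s ^ n) * (C₀ * (t ^ d * s ^ d))
      = t ^ d * s ^ d * s ^ n / (2 ^ n * C₀) * (10 ^ n * C₀ ^ 2) := by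
        rw [h10]; field_simp
    _ < t ^ d * s ^ d * s ^ n / (2 ^ n * C₀) * (t ^ ((n : ℝ) - d) * 2 ^ d) :=
        mul_lt_mul_of_pos_left ht_large hc
    _ = t ^ ((n : ℝ) - d) * t ^ d * s ^ n / 2 ^ n * (C₀⁻¹ * (2 ^ d * s ^ d)) := by
        field_simp

theorem complement_of_low_dimensional_AR_set_corkscrew_general
    (n : ℕ) (d C₀ : ℝ) (hd : d < (n : ℝ) - 1) (hC₀ : 0 < C₀)
    (Γ : Set (EuclideanSpace ℝ (Fin n)))
    (hAR : ∀ x ∈ Γ, ∀ r : ℝ, 0 < r → ENNReal.ofReal r < EMetric.diam Γ →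
      ENNReal.ofReal (C₀⁻¹ * r ^ d) ≤ μH[d] (Γ ∩ ball x r) ∧
      μH[d] (Γ ∩ ball x r) ≤ ENNReal.ofReal (C₀ * r ^ d)) :
    ∃ C₁ : ℝ, 0 < C₁ ∧
      ∀ x ∈ Γ, ∀ r : ℝ, 0 < r → ENNReal.ofReal r < EMetric.diam Γ →
        ∃ A : EuclideanSpace ℝ (Fin n), A ∈ Γᶜ ∩ ball x r ∧ ball A (C₁⁻¹ * r) ⊆ Γᶜ := by
  -- `hC₁_large` says `C₀² (C₁/2)^d < (C₁/10)ⁿ`; `6 ≤ C₁` keeps the `2s`-balls inside `B(x, r)`.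
  obtain ⟨C₁, hC₁_large, hC₁⟩ :
      ∃ C₁ : ℝ, 10 ^ n * C₀ ^ 2 < C₁ ^ ((n : ℝ) - d) * 2 ^ d ∧ 6 ≤ C₁ :=
    ((((tendsto_rpow_atTop (by linarith : 0 < (n : ℝ) - d)).atTop_mul_const
      (by positivity : (0 : ℝ) < 2 ^ d)).eventually_gt_atTop _).and
      (Filter.eventually_ge_atTop 6)).exists
  refine ⟨C₁, by positivity, fun x hx r hr hrΓ ↦ ?_⟩
  by_contra! hcon
  set s := (C₁⁻¹ * r).toNNReal
  have hs : (s : ℝ) = C₁⁻¹ * r := Real.coe_toNNReal _ (by positivity)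
  have hs_pos : 0 < s := Real.toNNReal_pos.2 (by positivity)
  have hr_eq : r = C₁ * s := by rw [hs]; field_simp
  have hdense : ball x r ⊆ thickening s Γ :=
    subset_thickening_of_forall_not_ball_subset_compl hs_pos (by rwa [hs])
  have hlow : ∀ y ∈ Γ ∩ ball x r,
      ENNReal.ofReal (C₀⁻¹ * (2 * s) ^ d) ≤ (μH[d].restrict Γ) (ball y (2 * s)) := by
    rintro y ⟨hyΓ, -⟩
    rw [Measure.restrict_apply measurableSet_ball, inter_comm]
    refine (hAR y hyΓ _ (by positivity) ((ENNReal.ofReal_le_ofReal ?_).trans_lt hrΓ)).1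
    rw [hr_eq]; nlinarith
  have key := ofReal_pow_finrank_mul_le_of_ball_subset_thickening _ hs_pos
    (by rw [hr_eq]; nlinarith) hdense hlow
  rw [Measure.restrict_apply measurableSet_ball, inter_comm, finrank_euclideanSpace_fin] at key
  have hcmp : ENNReal.ofReal ((r / 2) ^ n) * ENNReal.ofReal (C₀⁻¹ * (2 * s) ^ d) ≤
      ENNReal.ofReal ((5 * s) ^ n) * ENNReal.ofReal (C₀ * r ^ d) :=
    key.trans (by gcongr; exact (hAR x hx r hr hrΓ).2)
  rw [← ENNReal.ofReal_mul (by positivity), ← ENNReal.ofReal_mul (by positivity),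
    ENNReal.ofReal_le_ofReal_iff (by positivity), hr_eq] at hcmp
  exact hcmp.not_gt (five_mul_pow_mul_rpow_lt hC₀ (by positivity) (by positivity) hC₁_large)

/-- If Γ ⊂ ℝⁿ is d-Ahlfors regular with d < n-1, then Ω = ℝⁿ \ Γ satisfies
the corkscrew condition, with constant depending only on C₀, n, d. -/
theorem complement_of_low_dimensional_AR_set_corkscrew
    (n : ℕ) (d C₀ : ℝ) (hd₀ : 0 ≤ d) (hd : d < (n : ℝ) - 1) (hC₀ : 0 < C₀)
    (Γ : Set (EuclideanSpace ℝ (Fin n)))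
    (hAR : ∀ x ∈ Γ, ∀ r : ℝ, 0 < r → ENNReal.ofReal r < EMetric.diam Γ →
      ENNReal.ofReal (C₀⁻¹ * r ^ d) ≤ μH[d] (Γ ∩ ball x r) ∧
      μH[d] (Γ ∩ ball x r) ≤ ENNReal.ofReal (C₀ * r ^ d)) :
    ∃ C₁ : ℝ, 0 < C₁ ∧
      ∀ x ∈ Γ, ∀ r : ℝ, 0 < r → ENNReal.ofReal r < EMetric.diam Γ →
        ∃ A : EuclideanSpace ℝ (Fin n), A ∈ Γᶜ ∩ ball x r ∧ ball A (C₁⁻¹ * r) ⊆ Γᶜ :=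
  complement_of_low_dimensional_AR_set_corkscrew_general n d C₀ hd hC₀ Γ hAR
end

section
/- If Γ ⊂ ℝⁿ is a d-dimensional Ahlfors regular set with d < n−1, then Ω = ℝⁿ \ Γ satisfies the Harnack chain condition: there exist constants C₁, C₂ (depending on C₀, n, d) such that whenever X, Y ∈ Ω satisfy min(δ(X), δ(Y)) ≥ r and |X − Y| ≤ 7 C₁ r, there exist points Z₀ = X, Z₁, …, Z_{C₂} = Y in Ω with |Z_{i+1} − Z_i| ≤ δ(Z_i)/2 for all i, where δ(Z) = dist(Z, Γ). -/
/-!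
A `d`-regular set meets a ball of radius `R` in a set covered by `≲ (R/s)^d` balls of radius
`s`, so its `s`-neighbourhood has volume `≲ R^d s^(n-d)`, small compared with `R^n`; this gives
corkscrew points. For the Harnack chain, translate the segment `[X, Y]` by a vector `v` with
`‖v‖ < r/4`. The translations for which the segment comes `c r`-close to `Γ` lie in a union of
`≲ (1/c)^(d+1)` balls of radius `3 c r` (a net of `Γ` times a grid on the segment), whose volume
`≲ c^(n-1-d) r^n` is smaller than that of the ball of radius `r/4` once `c` is small, because
`d < n - 1`. Along a good translate, points at spacing `c r/2` form the chain.
-/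

open MeasureTheory Metric Set Module Filter Topology

section Separated

variable {α : Type*} [PseudoMetricSpace α]

lemma exists_finset_subset_iUnion_closedBall_of_isSeparated_card_le {A : Set α} {s : ℝ}
    (hs : 0 ≤ s) {K : ℕ}
    (hK : ∀ T : Finset α, ↑T ⊆ A → IsSeparated (ENNReal.ofReal s) (T : Set α) → T.card ≤ K) :
    ∃ T : Finset α, ↑T ⊆ A ∧ T.card ≤ K ∧ A ⊆ ⋃ p ∈ T, closedBall p s := by
  have hpack : packingNumber s.toNNReal A ≤ K := by
    refine iSup₂_le fun C hCA => iSup_le fun hC => ?_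
    by_contra! hlt
    obtain ⟨t, htC, ht⟩ := exists_subset_encard_eq (Order.add_one_le_of_lt hlt)
    have htfin : t.Finite := finite_of_encard_eq_coe ht
    have := hK htfin.toFinset (by simpa using htC.trans hCA)
      (by rw [Finite.coe_toFinset]; exact hC.subset htC)
    rw [htfin.encard_eq_coe_toFinset_card] at ht
    norm_cast at ht
    omega
  have hfin : packingNumber s.toNNReal A ≠ ⊤ := ne_top_of_le_ne_top (by simp) hpack
  have hCfin : (maximalSeparatedSet s.toNNReal A).Finite :=
    finite_of_encard_le_coe (encard_maximalSeparatedSet hfin ▸ hpack)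
  have hcover := isCover_iff_subset_iUnion_closedBall.1 (isCover_maximalSeparatedSet hfin)
  rw [Real.coe_toNNReal s hs] at hcover
  refine ⟨hCfin.toFinset, by simpa using maximalSeparatedSet_subset, hK _ ?_ ?_,
    by simpa using hcover⟩
  · simpa using maximalSeparatedSet_subset
  · rw [Finite.coe_toFinset]; exact isSeparated_maximalSeparatedSet

lemma exists_dist_lt_two_mul_of_infDist_lt {Γ : Set α} (hΓ : Γ.Nonempty) {T : Finset α}
    {z w : α} {R η : ℝ} (hT : Γ ∩ ball z R ⊆ ⋃ p ∈ T, closedBall p η)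
    (hw : infDist w Γ < η) (hwz : dist w z + η ≤ R) : ∃ p ∈ T, dist w p < 2 * η := by
  obtain ⟨γ, hγ, hwγ⟩ := (infDist_lt_iff hΓ).1 hw
  have hγz : γ ∈ ball z R := mem_ball.2 (by linarith [dist_triangle γ w z, dist_comm w γ])
  obtain ⟨p, hp, hγp⟩ := mem_iUnion₂.1 (hT ⟨hγ, hγz⟩)
  exact ⟨p, hp, by linarith [dist_triangle w γ p, mem_closedBall.1 hγp]⟩

lemma Finset.card_mul_le_measure_of_isSeparated [MeasurableSpace α] [OpensMeasurableSpace α]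
    (μ : Measure α) (T : Finset α) {s : ℝ} (hT : IsSeparated (ENNReal.ofReal s) (T : Set α))
    {U : Set α} (hU : ∀ p ∈ T, ball p (s / 2) ⊆ U) {a : ENNReal}
    (ha : ∀ p ∈ T, a ≤ μ (ball p (s / 2))) :
    T.card * a ≤ μ U := by
  have hdisj : (T : Set α).PairwiseDisjoint fun p => ball p (s / 2) := by
    intro p hp q hq hpq
    have hsep : ENNReal.ofReal s < edist p q := hT hp hq hpq
    rw [edist_dist, ENNReal.ofReal_lt_ofReal_iff'] at hsep
    exact ball_disjoint_ball (by linarith [hsep.1])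
  calc T.card * a = ∑ _p ∈ T, a := by rw [Finset.sum_const, nsmul_eq_mul]
    _ ≤ ∑ p ∈ T, μ (ball p (s / 2)) := Finset.sum_le_sum ha
    _ = μ (⋃ p ∈ T, ball p (s / 2)) :=
      (measure_biUnion_finset hdisj fun _ _ => measurableSet_ball).symm
    _ ≤ μ U := measure_mono (iUnion₂_subset hU)

end Separated

section FiniteDimensional

variable {F : Type*} [NormedAddCommGroup F] [NormedSpace ℝ F] [FiniteDimensional ℝ F]

lemma pow_finrank_le_card_mul_pow_of_ball_subset_iUnion {ι : Type*} {x : F} {r ρ : ℝ}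
    (hr : 0 < r) (hρ : 0 < ρ) (T : Finset ι) (c : ι → F)
    (h : ball x r ⊆ ⋃ i ∈ T, ball (c i) ρ) :
    r ^ finrank ℝ F ≤ T.card * ρ ^ finrank ℝ F := by
  borelize F
  set μ : Measure F := Measure.addHaar
  have key : ENNReal.ofReal (r ^ finrank ℝ F) * μ (ball 0 1)
      ≤ ENNReal.ofReal (T.card * ρ ^ finrank ℝ F) * μ (ball 0 1) :=
    calc ENNReal.ofReal (r ^ finrank ℝ F) * μ (ball 0 1) = μ (ball x r) :=
          (Measure.addHaar_ball_of_pos μ x hr).symm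
      _ ≤ μ (⋃ i ∈ T, ball (c i) ρ) := measure_mono h
      _ ≤ ∑ i ∈ T, μ (ball (c i) ρ) := measure_biUnion_finset_le _ _
      _ = ENNReal.ofReal (T.card * ρ ^ finrank ℝ F) * μ (ball 0 1) := by
        simp only [Measure.addHaar_ball_of_pos μ _ hρ, Finset.sum_const, nsmul_eq_mul]
        rw [ENNReal.ofReal_mul (by positivity), ENNReal.ofReal_natCast, mul_assoc]
  rwa [ENNReal.mul_le_mul_iff_left (measure_ball_pos μ 0 one_pos).ne' measure_ball_lt_top.ne,
    ENNReal.ofReal_le_ofReal_iff (by positivity)] at key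

lemma Finset.card_mul_pow_finrank_le_of_isSeparated (T : Finset F) {x : F} {R s : ℝ}
    (hR : 0 ≤ R) (hs : 0 < s) (hT : ↑T ⊆ closedBall x R)
    (hsep : IsSeparated (ENNReal.ofReal s) (T : Set F)) :
    T.card * (s / 2) ^ finrank ℝ F ≤ (R + s / 2) ^ finrank ℝ F := by
  borelize F
  set μ : Measure F := Measure.addHaar
  have key := T.card_mul_le_measure_of_isSeparated μ hsep (U := ball x (R + s / 2))
    (fun p hp => ball_subset_ball' (by linarith [mem_closedBall.1 (hT hp)]))
    fun p _ => (Measure.addHaar_ball_of_pos μ p (by linarith)).ge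
  rwa [Measure.addHaar_ball_of_pos μ x (by linarith), ← mul_assoc,
    ENNReal.mul_le_mul_iff_left (measure_ball_pos μ 0 one_pos).ne' measure_ball_lt_top.ne,
    ← ENNReal.ofReal_natCast, ← ENNReal.ofReal_mul (by positivity),
    ENNReal.ofReal_le_ofReal_iff (by positivity)] at key

end FiniteDimensional

lemma exists_le_abs_sub_div_le {t : ℝ} (ht₀ : 0 ≤ t) (ht₁ : t ≤ 1) {M : ℕ} (hM : 0 < M) :
    ∃ k ≤ M, |t - k / M| ≤ 1 / M := by
  have hM' : (0 : ℝ) < M := Nat.cast_pos.2 hM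
  refine ⟨⌊t * M⌋₊, Nat.floor_le_of_le (mul_le_of_le_one_left hM'.le ht₁), ?_⟩
  have h₁ := Nat.floor_le (mul_nonneg ht₀ hM'.le)
  have h₂ := Nat.lt_floor_add_one (t * M)
  rw [show t - ⌊t * M⌋₊ / M = (t * M - ⌊t * M⌋₊) / M by field_simp, abs_div, abs_of_pos hM',
    div_le_div_iff_of_pos_right hM', abs_le]
  constructor <;> linarith

lemma tendsto_div_rpow_mul_pow_nhdsGT_zero {a e : ℝ} (b : ℝ) (ha : 0 ≤ a) {n : ℕ}
    (he : e < n) : Tendsto (fun c : ℝ => (a / c) ^ e * (b * c) ^ n) (𝓝[>] 0) (𝓝 0) := by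
  have hpow : Tendsto (fun c : ℝ => c ^ ((n : ℝ) - e)) (𝓝[>] 0) (𝓝 0) := by
    have := (Real.continuousAt_rpow_const 0 ((n : ℝ) - e) (Or.inr (sub_nonneg.2 he.le))).tendsto
    rw [Real.zero_rpow (sub_ne_zero.2 he.ne')] at this
    exact this.mono_left nhdsWithin_le_nhds
  have hlim : Tendsto (fun c : ℝ => a ^ e * b ^ n * c ^ ((n : ℝ) - e)) (𝓝[>] 0) (𝓝 0) := by
    simpa using hpow.const_mul (a ^ e * b ^ n)
  refine hlim.congr' (eventually_nhdsWithin_of_forall fun c (hc : 0 < c) => ?_)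
  dsimp only
  rw [Real.div_rpow ha hc.le, mul_pow, Real.rpow_sub hc, Real.rpow_natCast]
  field_simp

lemma exists_mul_div_rpow_mul_pow_lt (B : ℝ) {a e : ℝ} (b : ℝ) (ha : 0 ≤ a) {n : ℕ}
    (he : e < n) {δ c₀ : ℝ} (hδ : 0 < δ) (hc₀ : 0 < c₀) :
    ∃ c : ℝ, B * ((a / c) ^ e * (b * c) ^ n) < δ ∧ 0 < c ∧ c ≤ c₀ := by
  have hlim := (tendsto_div_rpow_mul_pow_nhdsGT_zero b ha he).const_mul B
  rw [mul_zero] at hlim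
  exact ((hlim.eventually (gt_mem_nhds hδ)).and (Ioc_mem_nhdsGT hc₀)).exists

section Segment

variable {V : Type*} [NormedAddCommGroup V] [NormedSpace ℝ V]

lemma ball_subset_iUnion_ball_of_forall_segment_near {Γ : Set V} (hΓ : Γ.Nonempty)
    {T : Finset V} {X u : V} {ρ R η : ℝ} {M : ℕ}
    (hT : Γ ∩ ball X R ⊆ ⋃ p ∈ T, closedBall p η) (hR : ρ + ‖u‖ + η ≤ R) (hM : ‖u‖ < M * η)
    (hnear : ∀ v : V, ‖v‖ < ρ → ∃ t ∈ Icc (0 : ℝ) 1, infDist (X + v + t • u) Γ < η) :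
    ball 0 ρ ⊆
      ⋃ pk ∈ T ×ˢ Finset.range (M + 1), ball (pk.1 - X - ((pk.2 : ℝ) / M) • u) (3 * η) := by
  intro v hv
  rw [mem_ball_zero_iff] at hv
  obtain ⟨t, ⟨ht₀, ht₁⟩, hwΓ⟩ := hnear v hv
  have hw : dist (X + v + t • u) X ≤ ρ + ‖u‖ := by
    rw [add_assoc, dist_self_add_left]
    refine (norm_add_le _ _).trans ?_
    rw [norm_smul, Real.norm_of_nonneg ht₀]
    nlinarith [norm_nonneg u]
  obtain ⟨p, hp, hwp⟩ := exists_dist_lt_two_mul_of_infDist_lt hΓ hT hwΓ (by linarith)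
  have hM₀ : 0 < M := Nat.pos_of_ne_zero fun h => by
    simp only [h, CharP.cast_eq_zero, zero_mul] at hM
    exact (norm_nonneg u).not_gt hM
  obtain ⟨k, hk, htk⟩ := exists_le_abs_sub_div_le ht₀ ht₁ hM₀
  refine mem_iUnion₂.2 ⟨(p, k), Finset.mem_product.2 ⟨hp, Finset.mem_range.2 (by omega)⟩, ?_⟩
  have hgrid : |t - k / M| * ‖u‖ < η :=
    calc |t - k / M| * ‖u‖ ≤ 1 / M * ‖u‖ := mul_le_mul_of_nonneg_right htk (norm_nonneg u)
      _ < η := by rwa [one_div_mul_eq_div, div_lt_iff₀ (by positivity), mul_comm]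
  rw [mem_ball, dist_eq_norm]
  calc ‖v - (p - X - ((k : ℝ) / M) • u)‖ = ‖(X + v + t • u - p) - (t - k / M) • u‖ := by
        rw [sub_smul]; abel_nf
    _ ≤ dist (X + v + t • u) p + |t - k / M| * ‖u‖ := by
        rw [dist_eq_norm, ← Real.norm_eq_abs, ← norm_smul]; exact norm_sub_le _ _
    _ < 3 * η := by linarith

lemma exists_chain_of_segment_le_infDist {Γ : Set V} {X Y v : V} {r η : ℝ} {K : ℕ} (hr : 0 < r)
    (hη : 0 < η) (hK : 0 < K) (hX : r ≤ infDist X Γ) (hY : r ≤ infDist Y Γ) (hv : ‖v‖ ≤ r / 4)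
    (hseg : ∀ t ∈ Icc (0 : ℝ) 1, η ≤ infDist (X + v + t • (Y - X)) Γ)
    (hXY : 2 * dist X Y ≤ K * η) :
    ∃ Z : ℕ → V, Z 0 = X ∧ Z (K + 2) = Y ∧ (∀ i ≤ K + 2, Z i ∈ Γᶜ) ∧
      ∀ i < K + 2, dist (Z (i + 1)) (Z i) ≤ infDist (Z i) Γ / 2 := by
  set u := Y - X
  have hK' : (0 : ℝ) < K := Nat.cast_pos.2 hK
  set Z : ℕ → V := fun i =>
    if i = 0 then X else if i ≤ K + 1 then X + v + (((i - 1 : ℕ) : ℝ) / K) • u else Y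
  have hZ₀ : Z 0 = X := by simp [Z]
  have hZmid : ∀ j ≤ K, Z (j + 1) = X + v + ((j : ℝ) / K) • u := fun j hj => by simp [Z, hj]
  have hZ₁ : Z 1 = X + v := by simpa using hZmid 0 K.zero_le
  have hZlast : Z (K + 1) = Y + v := by
    rw [hZmid K le_rfl, div_self hK'.ne', one_smul]
    simp only [u]
    abel
  have hZend : Z (K + 2) = Y := by simp [Z]
  have hfarmid : ∀ j ≤ K, η ≤ infDist (X + v + ((j : ℝ) / K) • u) Γ := fun j hj =>
    hseg _ ⟨by positivity, div_le_one_of_le₀ (Nat.cast_le.2 hj) hK'.le⟩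
  have hfar : ∀ i ≤ K + 2, 0 < infDist (Z i) Γ := by
    rintro (_ | j) hj
    · exact hZ₀ ▸ hr.trans_le hX
    rcases Nat.lt_or_ge j (K + 1) with hjK | hjK
    · exact hZmid j (by omega) ▸ hη.trans_le (hfarmid j (by omega))
    · obtain rfl : j = K + 1 := by omega
      exact hZend ▸ hr.trans_le hY
  refine ⟨Z, hZ₀, hZend, fun i hi hmem => (hfar i hi).ne' (infDist_zero_of_mem hmem), ?_⟩
  rintro (_ | j) hj
  · rw [hZ₁, hZ₀, dist_self_add_left]
    linarith
  rcases Nat.lt_or_ge j K with hjK | hjK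
  · have hu : ‖u‖ = dist X Y := by rw [dist_comm, dist_eq_norm]
    rw [hZmid (j + 1) hjK, hZmid j hjK.le, dist_add_left, dist_eq_norm, ← sub_smul, norm_smul,
      Real.norm_eq_abs, Nat.cast_add_one, ← sub_div, add_sub_cancel_left,
      abs_of_pos (by positivity), one_div_mul_eq_div, div_le_iff₀ hK']
    nlinarith [hfarmid j hjK.le]
  · obtain rfl : K = j := by omega
    rw [hZend, hZlast, dist_self_add_right]
    linarith [infDist_le_infDist_add_dist (x := Y) (y := Y + v) (s := Γ), dist_self_add_right v Y]

end Segment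

def IsAhlforsRegular {α : Type*} [PseudoMetricSpace α] [MeasurableSpace α] (μ : Measure α)
    (d C₀ : ℝ) (Γ : Set α) : Prop :=
  ∀ x ∈ Γ, ∀ r : ℝ, 0 < r → ENNReal.ofReal r < ediam Γ →
    ENNReal.ofReal (C₀⁻¹ * r ^ d) ≤ μ (Γ ∩ ball x r) ∧
      μ (Γ ∩ ball x r) ≤ ENNReal.ofReal (C₀ * r ^ d)

namespace IsAhlforsRegular

-- `5 ^ n` bounds a packing in `ℝⁿ` (used above the diameter of `Γ`); `C₀ ^ 2 * 6 ^ d` compares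
-- the lower bound on the `s/2`-balls around an `s`-separated set with the upper bound on an
-- enclosing `3R`-ball.
noncomputable def packingConst (n : ℕ) (d C₀ : ℝ) : ℝ := max 1 (5 ^ n * C₀ ^ 2 * 6 ^ d)

lemma one_le_packingConst (n : ℕ) (d C₀ : ℝ) : 1 ≤ packingConst n d C₀ := le_max_left _ _

variable {n : ℕ} {μ : Measure (EuclideanSpace ℝ (Fin n))} {d C₀ : ℝ}
  {Γ : Set (EuclideanSpace ℝ (Fin n))}

local notation "ℝⁿ" => EuclideanSpace ℝ (Fin n)

theorem measure_le_of_ediam_ne_top (hΓ : IsAhlforsRegular μ d C₀ Γ) (hd : 0 ≤ d) (hC₀ : 0 < C₀)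
    (hbdd : ediam Γ ≠ ⊤) (hpos : 0 < diam Γ) :
    μ Γ ≤ ENNReal.ofReal (5 ^ n * C₀ * diam Γ ^ d) := by
  set D := diam Γ
  obtain ⟨x, hx⟩ : Γ.Nonempty :=
    Γ.eq_empty_or_nonempty.resolve_left fun h => by simp [h, D] at hpos
  have hΓx : Γ ⊆ closedBall x D := fun y hy => dist_le_diam_of_mem' hbdd hy hx
  have hK : ∀ T : Finset (ℝⁿ), ↑T ⊆ Γ →
      IsSeparated (ENNReal.ofReal (D / 2)) (T : Set (ℝⁿ)) → T.card ≤ 5 ^ n := by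
    intro T hTΓ hsep
    have hpack := T.card_mul_pow_finrank_le_of_isSeparated hpos.le (by positivity)
      (hTΓ.trans hΓx) hsep
    rw [finrank_euclideanSpace_fin, show D + D / 2 / 2 = 5 * (D / 2 / 2) by ring, mul_pow,
      mul_le_mul_iff_left₀ (by positivity)] at hpack
    exact_mod_cast hpack
  obtain ⟨T, hTΓ, hTcard, hcover⟩ :=
    exists_finset_subset_iUnion_closedBall_of_isSeparated_card_le (by positivity) hK
  have hdiam : ENNReal.ofReal (3 / 4 * D) < ediam Γ := by
    rw [← ENNReal.ofReal_toReal hbdd]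
    exact (ENNReal.ofReal_lt_ofReal_iff hpos).2 (by linarith)
  calc μ Γ ≤ μ (⋃ p ∈ T, Γ ∩ ball p (3 / 4 * D)) := by
        refine measure_mono fun y hy => ?_
        obtain ⟨p, hp, hyp⟩ := mem_iUnion₂.1 (hcover hy)
        exact mem_iUnion₂.2 ⟨p, hp, hy, closedBall_subset_ball (by linarith) hyp⟩
    _ ≤ ∑ p ∈ T, μ (Γ ∩ ball p (3 / 4 * D)) := measure_biUnion_finset_le _ _
    _ ≤ ∑ _p ∈ T, ENNReal.ofReal (C₀ * D ^ d) := by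
        refine Finset.sum_le_sum fun p hp => (hΓ p (hTΓ hp) _ (by positivity) hdiam).2.trans ?_
        gcongr
        linarith
    _ = ENNReal.ofReal (T.card * (C₀ * D ^ d)) := by
        rw [Finset.sum_const, nsmul_eq_mul, ENNReal.ofReal_mul (Nat.cast_nonneg _),
          ENNReal.ofReal_natCast]
    _ ≤ ENNReal.ofReal (5 ^ n * C₀ * D ^ d) := by
        rw [mul_assoc]
        gcongr
        exact_mod_cast hTcard

theorem measure_inter_ball_le (hΓ : IsAhlforsRegular μ d C₀ Γ) (hd : 0 ≤ d) (hC₀ : 0 < C₀)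
    (hpos : 0 < ediam Γ) {x : ℝⁿ} (hx : x ∈ Γ) {R : ℝ} (hR : 0 < R) :
    μ (Γ ∩ ball x R) ≤ ENNReal.ofReal (5 ^ n * C₀ * R ^ d) := by
  by_cases hRΓ : ENNReal.ofReal R < ediam Γ
  · refine (hΓ x hx R hR hRΓ).2.trans (ENNReal.ofReal_le_ofReal ?_)
    rw [mul_assoc]
    exact le_mul_of_one_le_left (by positivity) (one_le_pow₀ (by norm_num))
  · rw [not_lt] at hRΓ
    have hbdd : ediam Γ ≠ ⊤ := ne_top_of_le_ne_top ENNReal.ofReal_ne_top hRΓ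
    have hDR : diam Γ ≤ R := ENNReal.toReal_le_of_le_ofReal hR.le hRΓ
    calc μ (Γ ∩ ball x R) ≤ μ Γ := measure_mono inter_subset_left
      _ ≤ ENNReal.ofReal (5 ^ n * C₀ * diam Γ ^ d) :=
        hΓ.measure_le_of_ediam_ne_top hd hC₀ hbdd (ENNReal.toReal_pos hpos.ne' hbdd)
      _ ≤ ENNReal.ofReal (5 ^ n * C₀ * R ^ d) := by
        gcongr

theorem card_mul_le_of_isSeparated (hΓ : IsAhlforsRegular μ d C₀ Γ) (hd : 0 ≤ d)
    (hC₀ : 0 < C₀) {z : ℝⁿ} {R s : ℝ} (hs : 0 < s) (hsR : s ≤ R) (T : Finset ℝⁿ)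
    (hT : ↑T ⊆ Γ ∩ ball z R) (hsep : IsSeparated (ENNReal.ofReal s) (T : Set ℝⁿ))
    (hcard : 1 < T.card) :
    T.card * (C₀⁻¹ * (s / 2) ^ d) ≤ 5 ^ n * C₀ * (3 * R) ^ d := by
  have hR : 0 < R := hs.trans_le hsR
  obtain ⟨a, ha, b, hb, hab⟩ := Finset.one_lt_card.1 hcard
  have hdiam : ENNReal.ofReal (s / 2) < ediam Γ :=
    calc ENNReal.ofReal (s / 2) < ENNReal.ofReal s := by
          rw [ENNReal.ofReal_lt_ofReal_iff hs]; linarith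
      _ < edist a b := hsep ha hb hab
      _ ≤ ediam Γ := edist_le_ediam_of_mem (hT ha).1 (hT hb).1
  have hcount : T.card * ENNReal.ofReal (C₀⁻¹ * (s / 2) ^ d)
      ≤ ENNReal.ofReal (5 ^ n * C₀ * (3 * R) ^ d) :=
    calc T.card * ENNReal.ofReal (C₀⁻¹ * (s / 2) ^ d) ≤ μ.restrict Γ (ball a (3 * R)) := by
          refine T.card_mul_le_measure_of_isSeparated _ hsep (fun p hp => ball_subset_ball' ?_)
            fun p hp => ?_
          · linarith [dist_triangle p z a, mem_ball.1 (hT hp).2, mem_ball'.1 (hT ha).2]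
          · rw [Measure.restrict_apply measurableSet_ball, inter_comm]
            exact (hΓ p (hT hp).1 _ (by positivity) hdiam).1
      _ = μ (Γ ∩ ball a (3 * R)) := by rw [Measure.restrict_apply measurableSet_ball, inter_comm]
      _ ≤ _ := hΓ.measure_inter_ball_le hd hC₀ (pos_of_gt hdiam) (hT ha).1 (by linarith)
  rwa [← ENNReal.ofReal_natCast, ← ENNReal.ofReal_mul (by positivity),
    ENNReal.ofReal_le_ofReal_iff (by positivity)] at hcount

theorem card_le_of_isSeparated (hΓ : IsAhlforsRegular μ d C₀ Γ) (hd : 0 ≤ d) (hC₀ : 0 < C₀)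
    {z : ℝⁿ} {R s : ℝ} (hs : 0 < s) (hsR : s ≤ R) (T : Finset ℝⁿ) (hT : ↑T ⊆ Γ ∩ ball z R)
    (hsep : IsSeparated (ENNReal.ofReal s) (T : Set ℝⁿ)) :
    (T.card : ℝ) ≤ packingConst n d C₀ * (R / s) ^ d := by
  have hR : 0 < R := hs.trans_le hsR
  rcases le_or_gt T.card 1 with hcard | hcard
  · exact (Nat.cast_le_one.2 hcard).trans (one_le_mul_of_one_le_of_one_le
      (one_le_packingConst n d C₀) (Real.one_le_rpow ((one_le_div hs).2 hsR) hd))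
  have hcount := hΓ.card_mul_le_of_isSeparated hd hC₀ hs hsR T hT hsep hcard
  rw [show 3 * R = 6 * (R / s) * (s / 2) by field_simp; ring,
    Real.mul_rpow (by positivity) (by positivity), Real.mul_rpow (by norm_num) (by positivity),
    ← le_div_iff₀ (by positivity)] at hcount
  calc (T.card : ℝ) ≤ 5 ^ n * C₀ ^ 2 * 6 ^ d * (R / s) ^ d := hcount.trans_eq (by field_simp)
    _ ≤ packingConst n d C₀ * (R / s) ^ d := by
        gcongr
        exact le_max_right _ _

theorem exists_finset_cover (hΓ : IsAhlforsRegular μ d C₀ Γ) (hd : 0 ≤ d) (hC₀ : 0 < C₀)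
    (z : ℝⁿ) {R s : ℝ} (hs : 0 < s) (hsR : s ≤ R) :
    ∃ T : Finset (ℝⁿ), (T.card : ℝ) ≤ packingConst n d C₀ * (R / s) ^ d ∧
      Γ ∩ ball z R ⊆ ⋃ p ∈ T, closedBall p s := by
  have hR : 0 < R := hs.trans_le hsR
  have hB := one_le_packingConst n d C₀
  obtain ⟨T, -, hTcard, hcover⟩ := exists_finset_subset_iUnion_closedBall_of_isSeparated_card_le
    hs.le fun T hT hsep => Nat.le_floor (hΓ.card_le_of_isSeparated hd hC₀ hs hsR T hT hsep)
  exact ⟨T, (Nat.cast_le.2 hTcard).trans (Nat.floor_le (by positivity)), hcover⟩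

theorem exists_ball_subset_compl (hΓ : IsAhlforsRegular μ d C₀ Γ) (hd : 0 ≤ d) (hC₀ : 0 < C₀)
    {ε : ℝ} (hε : 0 < ε) (hε₂ : ε ≤ 1 / 2)
    (hsmall : packingConst n d C₀ * ((1 / ε) ^ d * (2 * ε) ^ n) < (1 / 2) ^ n)
    {x : ℝⁿ} (hx : x ∈ Γ) {r : ℝ} (hr : 0 < r) :
    ∃ A, A ∈ Γᶜ ∩ ball x r ∧ ball A (ε * r) ⊆ Γᶜ := by
  suffices ∃ A ∈ ball x (r / 2), ε * r ≤ infDist A Γ by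
    obtain ⟨A, hAx, hAΓ⟩ := this
    have hball : ball A (ε * r) ⊆ Γᶜ := (ball_subset_ball hAΓ).trans ball_infDist_subset_compl
    exact ⟨A, ⟨hball (mem_ball_self (by positivity)), ball_subset_ball (by linarith) hAx⟩, hball⟩
  by_contra! hnear
  obtain ⟨T, hTcard, hTcover⟩ :=
    hΓ.exists_finset_cover hd hC₀ x (mul_pos hε hr) (R := r) (by nlinarith)
  have hcover : ball x (r / 2) ⊆ ⋃ p ∈ T, ball p (2 * (ε * r)) := fun w hw => by
    obtain ⟨p, hp, hwp⟩ := exists_dist_lt_two_mul_of_infDist_lt ⟨x, hx⟩ hTcover (hnear w hw)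
      (by nlinarith [mem_ball.1 hw])
    exact mem_iUnion₂.2 ⟨p, hp, hwp⟩
  have hvol := pow_finrank_le_card_mul_pow_of_ball_subset_iUnion (by positivity) (by positivity)
    T id hcover
  rw [finrank_euclideanSpace_fin] at hvol
  rw [show r / (ε * r) = 1 / ε by field_simp] at hTcard
  have := calc (r / 2) ^ n ≤ T.card * (2 * (ε * r)) ^ n := hvol
    _ ≤ packingConst n d C₀ * (1 / ε) ^ d * ((2 * ε) ^ n * r ^ n) := by
      rw [← mul_pow, ← mul_assoc]
      gcongr
    _ < (1 / 2) ^ n * r ^ n := by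
      rw [← mul_assoc, mul_assoc (packingConst n d C₀)]
      gcongr
    _ = (r / 2) ^ n := by rw [← mul_pow, one_div_mul_eq_div]
  exact lt_irrefl _ this

theorem exists_translate_segment_le_infDist (hΓ : IsAhlforsRegular μ d C₀ Γ) (hd : 0 ≤ d)
    (hC₀ : 0 < C₀) (hne : Γ.Nonempty) {L c : ℝ} (hL : 0 ≤ L) (hc : 0 < c) (hc₁ : c ≤ 1)
    (hsmall : packingConst n d C₀ * (((L + 2) / c) ^ (d + 1) * (3 * c) ^ n) < (1 / 4) ^ n)
    {X Y : ℝⁿ} {r : ℝ} (hr : 0 < r) (hXY : dist X Y ≤ L * r) :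
    ∃ v : ℝⁿ, ‖v‖ < r / 4 ∧
      ∀ t ∈ Icc (0 : ℝ) 1, c * r ≤ infDist (X + v + t • (Y - X)) Γ := by
  by_contra! hnear
  set u := Y - X
  set η := c * r
  have hη : 0 < η := mul_pos hc hr
  have hu : ‖u‖ ≤ L * r := by rwa [← dist_eq_norm, dist_comm]
  set M := ⌊‖u‖ / η⌋₊ + 1
  have hM : ‖u‖ < M * η := by
    rw [← div_lt_iff₀ hη, Nat.cast_add_one]
    exact Nat.lt_floor_add_one _
  have hM₂ : (M + 1 : ℝ) ≤ (L + 2) / c := by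
    have := Nat.floor_le (div_nonneg (norm_nonneg u) hη.le)
    rw [le_div_iff₀ hη] at this
    rw [le_div_iff₀ hc]
    simp only [M, Nat.cast_add_one]
    nlinarith
  obtain ⟨T, hTcard, hTcover⟩ :=
    hΓ.exists_finset_cover hd hC₀ X hη (R := (L + 2) * r) (by nlinarith)
  rw [show (L + 2) * r / η = (L + 2) / c by simp only [η]; field_simp] at hTcard
  have hvol := pow_finrank_le_card_mul_pow_of_ball_subset_iUnion (by positivity) (by positivity)
    _ _ (ball_subset_iUnion_ball_of_forall_segment_near hne hTcover (by nlinarith) hM hnear)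
  rw [finrank_euclideanSpace_fin, Finset.card_product, Finset.card_range, Nat.cast_mul,
    Nat.cast_add_one] at hvol
  have := calc (r / 4) ^ n ≤ T.card * (M + 1) * (3 * η) ^ n := hvol
    _ ≤ packingConst n d C₀ * ((L + 2) / c) ^ d * ((L + 2) / c) * ((3 * c) ^ n * r ^ n) := by
      rw [← mul_pow, mul_assoc 3]
      have := one_le_packingConst n d C₀
      gcongr
    _ = packingConst n d C₀ * (((L + 2) / c) ^ (d + 1) * (3 * c) ^ n) * r ^ n := by
      rw [Real.rpow_add_one (by positivity)]
      ring
    _ < (1 / 4) ^ n * r ^ n := by gcongr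
    _ = (r / 4) ^ n := by rw [← mul_pow, one_div_mul_eq_div]
  exact lt_irrefl _ this

end IsAhlforsRegular

/-- If Γ ⊂ ℝⁿ is d-Ahlfors regular with d < n-1, then Ω = ℝⁿ \ Γ satisfies the
Harnack chain condition: there are C₁ > 0 and C₂ : ℕ (depending on C₀, n, d, with C₁ the
corkscrew constant) such that whenever X, Y ∈ Ω, r > 0, min(δ(X),δ(Y)) ≥ r and
|X - Y| ≤ 7 C₁ r, there is a chain Z₀ = X, …, Z_{C₂} = Y in Ω with
|Z_{i+1} - Z_i| ≤ δ(Z_i)/2, where δ(Z) = dist(Z, Γ). -/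
theorem complement_of_low_dimensional_AR_set_harnack_chain
    (n : ℕ) (d C₀ : ℝ) (hd₀ : 0 ≤ d) (hd : d < (n : ℝ) - 1) (hC₀ : 0 < C₀)
    (Γ : Set (EuclideanSpace ℝ (Fin n)))
    (hAR : ∀ x ∈ Γ, ∀ r : ℝ, 0 < r → ENNReal.ofReal r < EMetric.diam Γ →
      ENNReal.ofReal (C₀⁻¹ * r ^ d) ≤ μH[d] (Γ ∩ ball x r) ∧
      μH[d] (Γ ∩ ball x r) ≤ ENNReal.ofReal (C₀ * r ^ d)) :
    ∃ C₁ : ℝ, 0 < C₁ ∧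
      (∀ x ∈ Γ, ∀ r : ℝ, 0 < r → ENNReal.ofReal r < EMetric.diam Γ →
        ∃ A : EuclideanSpace ℝ (Fin n), A ∈ Γᶜ ∩ ball x r ∧ ball A (C₁⁻¹ * r) ⊆ Γᶜ) ∧
      ∃ C₂ : ℕ,
        ∀ X Y : EuclideanSpace ℝ (Fin n), X ∈ Γᶜ → Y ∈ Γᶜ → ∀ r : ℝ, 0 < r →
          r ≤ Metric.infDist X Γ → r ≤ Metric.infDist Y Γ → dist X Y ≤ 7 * C₁ * r →
          ∃ Z : ℕ → EuclideanSpace ℝ (Fin n),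
            Z 0 = X ∧ Z C₂ = Y ∧ (∀ i ≤ C₂, Z i ∈ Γᶜ) ∧
            ∀ i < C₂, dist (Z (i + 1)) (Z i) ≤ Metric.infDist (Z i) Γ / 2 := by
  have hΓ : IsAhlforsRegular μH[d] d C₀ Γ := hAR
  obtain ⟨ε, hεsmall, hε₀, hε₂⟩ := exists_mul_div_rpow_mul_pow_lt
    (IsAhlforsRegular.packingConst n d C₀) 2 zero_le_one (by linarith : d < n)
    (by positivity : (0 : ℝ) < (1 / 2) ^ n) one_half_pos
  set L := 7 * ε⁻¹
  -- `c` exists because the exponent `n - (d + 1)` is positive, i.e. because `d < n - 1`.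
  obtain ⟨c, hcsmall, hc₀, hc₁⟩ := exists_mul_div_rpow_mul_pow_lt
    (IsAhlforsRegular.packingConst n d C₀) 3 (by positivity : 0 ≤ L + 2)
    (by linarith : d + 1 < n) (by positivity : (0 : ℝ) < (1 / 4) ^ n) one_pos
  obtain ⟨K, hK⟩ := exists_nat_gt (2 * L / c)
  have hK₀ : 0 < K := Nat.cast_pos.1 ((by positivity : 0 < 2 * L / c).trans hK)
  refine ⟨ε⁻¹, inv_pos.2 hε₀, fun x hx r hr _ => ?_, K + 2, fun X Y _ _ r hr hX hY hXY => ?_⟩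
  · rw [inv_inv]
    exact hΓ.exists_ball_subset_compl hd₀ hC₀ hε₀ hε₂ hεsmall hx hr
  have hne : Γ.Nonempty := Γ.eq_empty_or_nonempty.resolve_left fun h => by
    rw [h, infDist_empty] at hX
    linarith
  obtain ⟨v, hv, hseg⟩ :=
    hΓ.exists_translate_segment_le_infDist hd₀ hC₀ hne (by positivity) hc₀ hc₁ hcsmall hr hXY
  refine exists_chain_of_segment_le_infDist hr (mul_pos hc₀ hr) hK₀ hX hY hv.le hseg ?_
  rw [div_lt_iff₀ hc₀] at hK
  nlinarith
end

section
/- Let Γ ⊂ ℝⁿ be d-dimensional Ahlfors regular with d < n−1 and let m(E) = ∫_E dist(X,Γ)^{d+1−n} dX. Then there is C > 0 depending only on C₀, n, d such that C⁻¹ r^{d+1} ≤ m(B(x,r)) ≤ C r^{d+1} for all x ∈ Γ and r > 0. -/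
open MeasureTheory Metric Set Module
open scoped ENNReal NNReal

/-!
Cover the `s`-neighbourhood of `Γ` inside `B(x, r)` by the balls `B(t, 3s)` centred at a maximal
`s`-separated subset of `Γ ∩ B(x, 3r)`. The balls `B(t, s/2)` are disjoint, so Ahlfors regularity
bounds the number of centres by `C (r / s)^d`, and the neighbourhood has volume `≲ r^d s^(n-d)`.
Upper bound: on the dyadic shell `dist(X, Γ) ≈ r 2^(-k)` of `B(x, r)` the weight is
`≈ (r 2^(-k))^(d+1-n)`, so the shell contributes `≲ r^(d+1) 2^(-k)`, a geometric series.
Lower bound: for a small fixed `ε` the `εr`-neighbourhood fills at most half of `B(x, r)`, and on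
the other half the weight is at least `r^(d+1-n)`.
-/

namespace Metric

variable {X : Type*} [MetricSpace X] [MeasurableSpace X] [OpensMeasurableSpace X]
  (ν : Measure X) {S C : Set X} {ε : ℝ≥0} {a : ℝ≥0∞}

theorem encard_mul_le_measure_thickening_of_isSeparated (hCS : C ⊆ S) (hC : C.Countable)
    (hsep : IsSeparated ε C) (ha : ∀ t ∈ S, a ≤ ν (ball t (ε / 2))) :
    C.encard * a ≤ ν (thickening (ε / 2) S) := by
  have hdisj : C.PairwiseDisjoint fun t => ball t (ε / 2) := fun t ht u hu htu =>
    ball_disjoint_ball <| by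
      have : (ε : ℝ≥0∞) < edist t u := hsep ht hu htu
      rw [edist_nndist, ENNReal.coe_lt_coe, ← NNReal.coe_lt_coe, coe_nndist] at this
      linarith
  calc C.encard * a = ∑' _ : C, a := (ENNReal.tsum_set_const _ _).symm
    _ ≤ ∑' t : C, ν (ball t (ε / 2)) := ENNReal.tsum_le_tsum fun t => ha t (hCS t.2)
    _ = ν (⋃ t ∈ C, ball t (ε / 2)) :=
      (measure_biUnion hC hdisj fun _ _ => measurableSet_ball).symm
    _ ≤ ν (thickening (ε / 2) S) :=
      measure_mono <| iUnion₂_subset fun t ht => ball_subset_thickening (hCS ht) _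

theorem packingNumber_ne_top_of_measure (ha₀ : a ≠ 0)
    (ha : ∀ t ∈ S, a ≤ ν (ball t (ε / 2))) (hS : ν (thickening (ε / 2) S) ≠ ∞) :
    packingNumber ε S ≠ ⊤ := by
  intro htop
  obtain ⟨N, hN⟩ := ENNReal.exists_nat_mul_gt ha₀ hS
  obtain ⟨C, hCS, hsep, hC⟩ : ∃ C ⊆ S, IsSeparated ε C ∧ (N : ℕ∞) < C.encard := by
    have : (N : ℕ∞) < packingNumber ε S := htop ▸ ENat.natCast_lt_top N
    simpa only [packingNumber, lt_iSup_iff, exists_prop] using this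
  obtain ⟨F, hFC, hF⟩ := exists_subset_encard_eq hC.le
  have hFfin : F.Finite := finite_of_encard_eq_coe hF
  have := encard_mul_le_measure_thickening_of_isSeparated ν (hFC.trans hCS) hFfin.countable
    (hsep.subset hFC) ha
  rw [hF] at this
  exact (this.trans_lt hN).ne (by simp)

theorem exists_finite_subset_cover_encard_mul_le (ha₀ : a ≠ 0)
    (ha : ∀ t ∈ S, a ≤ ν (ball t (ε / 2))) (hS : ν (thickening (ε / 2) S) ≠ ∞) :
    ∃ T ⊆ S, T.Finite ∧ T.encard * a ≤ ν (thickening (ε / 2) S) ∧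
      S ⊆ ⋃ t ∈ T, closedBall t ε := by
  have hpack := packingNumber_ne_top_of_measure ν ha₀ ha hS
  have hfin : (maximalSeparatedSet ε S).Finite := by
    rw [← encard_ne_top_iff, encard_maximalSeparatedSet hpack]
    exact hpack
  exact ⟨_, maximalSeparatedSet_subset, hfin,
    encard_mul_le_measure_thickening_of_isSeparated ν maximalSeparatedSet_subset hfin.countable
      isSeparated_maximalSeparatedSet ha,
    (isCover_maximalSeparatedSet hpack).subset_iUnion_closedBall⟩

end Metric

theorem div_two_pow_rpow {r : ℝ} (hr : 0 ≤ r) (β : ℝ) (k : ℕ) :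
    (r / 2 ^ k) ^ β = r ^ β * (2 ^ (-β)) ^ k := by
  rw [Real.div_rpow hr (by positivity), ← Real.rpow_natCast, ← Real.rpow_natCast,
    ← Real.rpow_mul zero_le_two, ← Real.rpow_mul zero_le_two, div_eq_mul_inv,
    ← Real.rpow_neg zero_le_two]
  ring_nf

theorem exists_mem_Ioc_div_two_pow {r t : ℝ} (ht : 0 < t) (htr : t ≤ r) :
    ∃ k : ℕ, t ∈ Ioc (r / 2 ^ (k + 1)) (r / 2 ^ k) := by
  obtain ⟨k, hk, hk'⟩ := exists_nat_pow_near ((one_le_div ht).2 htr) one_lt_two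
  refine ⟨k, (div_lt_iff₀ (by positivity)).2 ?_, (le_div_iff₀ (by positivity)).2 ?_⟩
  · rw [mul_comm]; exact (div_lt_iff₀ ht).1 hk'
  · rw [mul_comm]; exact (le_div_iff₀ ht).1 hk

/-- The `k`-th dyadic shell `r / 2 ^ (k + 1) < g ≤ r / 2 ^ k` contributes at most
`2 ^ (-α) * M * r ^ (α + β) * (2 ^ (-(α + β))) ^ k`; the constant is the sum of this series. -/
theorem setLIntegral_rpow_le_of_measure_sublevel_le {Ω : Type*} [MeasurableSpace Ω]
    (μ : Measure Ω) {A : Set Ω} {g : Ω → ℝ} {α β r M : ℝ} (hA : MeasurableSet A)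
    (hg : Measurable g) (hα : α < 0) (hαβ : 0 < α + β)
    (hr : 0 < r) (hM : 0 ≤ M) (hg₀ : ∀ ω ∈ A, 0 ≤ g ω) (hgr : ∀ ω ∈ A, g ω ≤ r)
    (hμ : ∀ ρ, 0 < ρ → ρ ≤ r → μ (A ∩ {ω | g ω ≤ ρ}) ≤ ENNReal.ofReal (M * ρ ^ β)) :
    ∫⁻ ω in A, ENNReal.ofReal (g ω ^ α) ∂μ ≤
      ENNReal.ofReal (2 ^ (-α) / (1 - 2 ^ (-(α + β))) * M * r ^ (α + β)) := by
  set S : ℕ → Set Ω := fun k => A ∩ {ω | r / 2 ^ (k + 1) < g ω ∧ g ω ≤ r / 2 ^ k}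
  set Z := A ∩ {ω | g ω = 0}
  -- `0 ^ α = 0` for real `α ≠ 0`, so the zero set of `g` contributes nothing.
  have hZ : ∫⁻ ω in Z, ENNReal.ofReal (g ω ^ α) ∂μ = 0 :=
    setLIntegral_eq_zero (hA.inter (measurableSet_eq_fun hg measurable_const)) fun ω hω => by
      rw [Pi.zero_apply, hω.2, Real.zero_rpow hα.ne, ENNReal.ofReal_zero]
  have hcover : A ⊆ Z ∪ ⋃ k, S k := by
    intro ω hω
    rcases (hg₀ ω hω).eq_or_lt with h | h
    · exact Or.inl ⟨hω, h.symm⟩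
    · obtain ⟨k, hk⟩ := exists_mem_Ioc_div_two_pow h (hgr ω hω)
      exact Or.inr (mem_iUnion.2 ⟨k, hω, hk⟩)
  have hS : ∀ k, ∫⁻ ω in S k, ENNReal.ofReal (g ω ^ α) ∂μ ≤
      ENNReal.ofReal (2 ^ (-α) * M * r ^ (α + β) * (2 ^ (-(α + β))) ^ k) := by
    intro k
    have hSk : MeasurableSet (S k) :=
      hA.inter ((measurableSet_lt measurable_const hg).inter
        (measurableSet_le hg measurable_const))
    have hsub : S k ⊆ A ∩ {ω | g ω ≤ r / 2 ^ k} := fun ω hω => ⟨hω.1, hω.2.2⟩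
    calc ∫⁻ ω in S k, ENNReal.ofReal (g ω ^ α) ∂μ
        ≤ ∫⁻ _ in S k, ENNReal.ofReal ((r / 2 ^ (k + 1)) ^ α) ∂μ :=
          setLIntegral_mono' hSk fun ω hω => ENNReal.ofReal_le_ofReal <|
            Real.rpow_le_rpow_of_nonpos (by positivity) hω.2.1.le hα.le
      _ = ENNReal.ofReal ((r / 2 ^ (k + 1)) ^ α) * μ (S k) := setLIntegral_const _ _
      _ ≤ ENNReal.ofReal ((r / 2 ^ (k + 1)) ^ α) * ENNReal.ofReal (M * (r / 2 ^ k) ^ β) := by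
          gcongr
          exact (measure_mono hsub).trans
            (hμ _ (by positivity) (div_le_self hr.le (one_le_pow₀ one_le_two)))
      _ = _ := by
          rw [← ENNReal.ofReal_mul (by positivity), div_two_pow_rpow hr.le,
            div_two_pow_rpow hr.le, Real.rpow_add hr, neg_add, Real.rpow_add two_pos, mul_pow]
          congr 1
          ring
  calc ∫⁻ ω in A, ENNReal.ofReal (g ω ^ α) ∂μ
      ≤ ∫⁻ ω in Z ∪ ⋃ k, S k, ENNReal.ofReal (g ω ^ α) ∂μ :=
        lintegral_mono_set hcover
    _ ≤ ∑' k, ∫⁻ ω in S k, ENNReal.ofReal (g ω ^ α) ∂μ := by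
      refine (lintegral_union_le _ _ _).trans ?_
      rw [hZ, zero_add]
      exact lintegral_iUnion_le _ _
    _ ≤ ∑' k, ENNReal.ofReal (2 ^ (-α) * M * r ^ (α + β) * (2 ^ (-(α + β))) ^ k) :=
      ENNReal.tsum_le_tsum hS
    _ = _ := by
      have hq : (2 : ℝ) ^ (-(α + β)) < 1 :=
        Real.rpow_lt_one_of_one_lt_of_neg one_lt_two (by linarith)
      have hrαβ := Real.rpow_nonneg hr.le (α + β)
      rw [← ENNReal.ofReal_tsum_of_nonneg (fun k => by positivity)
        ((summable_geometric_of_lt_one (by positivity) hq).mul_left _), tsum_mul_left,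
        tsum_geometric_of_lt_one (by positivity) hq]
      ring_nf

def AhlforsRegular {X : Type*} [MetricSpace X] [MeasurableSpace X] [BorelSpace X]
    (d C₀ : ℝ) (Γ : Set X) : Prop :=
  ∀ x ∈ Γ, ∀ r : ℝ, 0 < r →
    ENNReal.ofReal (C₀⁻¹ * r ^ d) ≤ μH[d] (Γ ∩ ball x r) ∧
    μH[d] (Γ ∩ ball x r) ≤ ENNReal.ofReal (C₀ * r ^ d)

namespace AhlforsRegular

section MetricSpace

variable {X : Type*} [MetricSpace X] [MeasurableSpace X] [BorelSpace X]
  {d C₀ : ℝ} {Γ : Set X} {x : X}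

theorem exists_finite_cover (hΓ : AhlforsRegular d C₀ Γ) (hC₀ : 0 < C₀) (hx : x ∈ Γ)
    {R s : ℝ} (hR : 0 ≤ R) (hs : 0 < s) :
    ∃ T : Set X, T.Finite ∧ (T.ncard : ℝ) ≤ C₀ ^ 2 * (2 * (R + s) / s) ^ d ∧
      Γ ∩ closedBall x R ⊆ ⋃ t ∈ T, closedBall t s := by
  have hs' : ((s.toNNReal : ℝ≥0) : ℝ) = s := Real.coe_toNNReal _ hs.le
  have hμΓ : ∀ y ρ, μH[d].restrict Γ (ball y ρ) = μH[d] (Γ ∩ ball y ρ) :=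
    fun y ρ => by rw [Measure.restrict_apply measurableSet_ball, inter_comm]
  have hthick : μH[d].restrict Γ (thickening (s / 2) (Γ ∩ closedBall x R)) ≤
      ENNReal.ofReal (C₀ * (R + s) ^ d) := by
    refine (measure_mono (thickening_subset_of_subset _ inter_subset_right |>.trans ?_)).trans
      ((hμΓ x _).trans_le (hΓ x hx _ (by positivity)).2)
    intro y hy
    obtain ⟨z, hz, hyz⟩ := mem_thickening_iff.1 hy
    exact mem_ball.2 <| (dist_triangle y z x).trans_lt (by linarith [mem_closedBall.1 hz])
  obtain ⟨T, -, hT, hcard, hcov⟩ := exists_finite_subset_cover_encard_mul_le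
    (μH[d].restrict Γ) (S := Γ ∩ closedBall x R) (ε := s.toNNReal)
    (a := ENNReal.ofReal (C₀⁻¹ * (s / 2) ^ d)) (ENNReal.ofReal_pos.2 (by positivity)).ne'
    (fun t ht => by rw [hs', hμΓ]; exact (hΓ t ht.1 _ (by positivity)).1)
    (by rw [hs']; exact ne_top_of_le_ne_top ENNReal.ofReal_ne_top hthick)
  refine ⟨T, hT, ?_, by rwa [hs'] at hcov⟩
  rw [hs'] at hcard
  have := hcard.trans hthick
  rw [← hT.cast_ncard_eq, ENat.toENNReal_coe, ← ENNReal.ofReal_natCast,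
    ← ENNReal.ofReal_mul (by positivity),
    ENNReal.ofReal_le_ofReal_iff (by positivity)] at this
  calc (T.ncard : ℝ) = T.ncard * (C₀⁻¹ * (s / 2) ^ d) * (C₀ / (s / 2) ^ d) := by field_simp
    _ ≤ C₀ * (R + s) ^ d * (C₀ / (s / 2) ^ d) := by gcongr
    _ = C₀ ^ 2 * (2 * (R + s) / s) ^ d := by
      rw [Real.div_rpow (by positivity) hs.le, Real.mul_rpow zero_le_two (by positivity),
        Real.div_rpow hs.le zero_le_two]
      field_simp

end MetricSpace

section AddHaar

variable {E : Type*} [NormedAddCommGroup E] [NormedSpace ℝ E] [FiniteDimensional ℝ E]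
  [MeasurableSpace E] [BorelSpace E] (μ : Measure E) [μ.IsAddHaarMeasure]
  {d C₀ : ℝ} {Γ : Set E} {x : E}

theorem addHaar_ball_inter_infDist_le (hΓ : AhlforsRegular d C₀ Γ) (hd₀ : 0 ≤ d)
    (hC₀ : 0 < C₀) (hx : x ∈ Γ) {r s : ℝ} (hs : 0 < s) (hsr : s ≤ r) :
    μ (ball x r ∩ {X | infDist X Γ ≤ s}) ≤ ENNReal.ofReal
      (C₀ ^ 2 * 8 ^ d * 3 ^ finrank ℝ E * r ^ d * s ^ ((finrank ℝ E : ℝ) - d) *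
        (μ (ball 0 1)).toReal) := by
  set N := finrank ℝ E
  have hr : 0 < r := hs.trans_le hsr
  obtain ⟨T, hT, hcard, hcov⟩ :=
    hΓ.exists_finite_cover hC₀ hx (R := 3 * r) (by linarith) hs
  have hnear : ball x r ∩ {X | infDist X Γ ≤ s} ⊆ ⋃ t ∈ T, ball t (3 * s) := by
    rintro X ⟨hXx, hXΓ⟩
    obtain ⟨y, hyΓ, hXy⟩ :=
      (infDist_lt_iff ⟨x, hx⟩).1 (hXΓ.trans_lt (by linarith : s < 2 * s))
    have hyx : dist y x ≤ 3 * r := by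
      linarith [dist_triangle_left y x X, mem_ball.1 hXx, dist_comm X y]
    obtain ⟨t, ht, hyt⟩ := mem_iUnion₂.1 (hcov ⟨hyΓ, mem_closedBall.2 hyx⟩)
    exact mem_iUnion₂.2 ⟨t, ht, mem_ball.2 <|
      (dist_triangle X y t).trans_lt (by linarith [mem_closedBall.1 hyt])⟩
  have hcard' :
      (T.ncard : ℝ) * (3 * s) ^ N ≤ C₀ ^ 2 * 8 ^ d * 3 ^ N * r ^ d * s ^ ((N : ℝ) - d) :=
    calc (T.ncard : ℝ) * (3 * s) ^ N ≤ C₀ ^ 2 * (8 * r / s) ^ d * (3 ^ N * s ^ N) := by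
          rw [mul_pow]
          gcongr
          have h8 : 2 * (3 * r + s) / s ≤ 8 * r / s := by gcongr ?_ / s; linarith
          exact hcard.trans (by gcongr)
      _ = _ := by
        rw [Real.div_rpow (by positivity) hs.le, Real.mul_rpow (by norm_num) hr.le,
          Real.rpow_sub hs, Real.rpow_natCast]
        ring
  calc μ (ball x r ∩ {X | infDist X Γ ≤ s})
      ≤ ∑' t : T, μ (ball t (3 * s)) :=
        (measure_mono hnear).trans (measure_biUnion_le μ hT.countable _)
    _ = T.encard * (ENNReal.ofReal ((3 * s) ^ N) * μ (ball 0 1)) := by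
      simp_rw [Measure.addHaar_ball_of_pos μ _ (by positivity : 0 < 3 * s)]
      exact ENNReal.tsum_set_const _ _
    _ = ENNReal.ofReal (T.ncard * (3 * s) ^ N * (μ (ball 0 1)).toReal) := by
      rw [← hT.cast_ncard_eq, ENat.toENNReal_coe, ← ENNReal.ofReal_natCast,
        ← ENNReal.ofReal_toReal (measure_ball_lt_top (x := (0 : E)) (r := 1)).ne,
        ← ENNReal.ofReal_mul (by positivity), ← ENNReal.ofReal_mul (by positivity), mul_assoc,
        ENNReal.toReal_ofReal ENNReal.toReal_nonneg]
    _ ≤ _ := ENNReal.ofReal_le_ofReal (mul_le_mul_of_nonneg_right hcard' ENNReal.toReal_nonneg)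

end AddHaar

section Integral

variable {E : Type*} [NormedAddCommGroup E] [NormedSpace ℝ E] [FiniteDimensional ℝ E]
  [MeasurableSpace E] [BorelSpace E] (μ : Measure E) [μ.IsAddHaarMeasure]
  {d C₀ : ℝ} {Γ : Set E}

theorem exists_setLIntegral_infDist_rpow_le (hΓ : AhlforsRegular d C₀ Γ) (hd₀ : 0 ≤ d)
    (hd : d < finrank ℝ E - 1) (hC₀ : 0 < C₀) :
    ∃ C : ℝ, ∀ x ∈ Γ, ∀ r : ℝ, 0 < r →
      ∫⁻ X in ball x r, ENNReal.ofReal (infDist X Γ ^ (d + 1 - finrank ℝ E)) ∂μ ≤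
        ENNReal.ofReal (C * r ^ (d + 1)) := by
  set N : ℝ := (finrank ℝ E : ℝ)
  set K := C₀ ^ 2 * 8 ^ d * 3 ^ finrank ℝ E * (μ (ball 0 1)).toReal
  refine ⟨2 ^ (-(d + 1 - N)) / (1 - 2 ^ (-(d + 1 - N + (N - d)))) * K, fun x hx r hr => ?_⟩
  have := setLIntegral_rpow_le_of_measure_sublevel_le μ measurableSet_ball
    (continuous_infDist_pt Γ).measurable (α := d + 1 - N) (β := N - d) (by linarith)
    (by linarith) hr
    (M := K * r ^ d) (by positivity) (fun _ _ => infDist_nonneg)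
    (fun X hX => (infDist_le_dist_of_mem hx).trans (mem_ball.1 hX).le)
    (fun ρ hρ hρr => (addHaar_ball_inter_infDist_le μ hΓ hd₀ hC₀ hx hρ hρr).trans_eq
      (by congr 1; ring))
  refine this.trans_eq (congrArg ENNReal.ofReal ?_)
  rw [show d + 1 - N + (N - d) = 1 by ring, Real.rpow_add_one hr.ne', Real.rpow_one]
  ring

theorem exists_le_addHaar_ball_inter_lt_infDist (hΓ : AhlforsRegular d C₀ Γ) (hd₀ : 0 ≤ d)
    (hd : d < finrank ℝ E) (hC₀ : 0 < C₀) :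
    ∃ ε > 0, ∀ x ∈ Γ, ∀ r : ℝ, 0 < r →
      ENNReal.ofReal ((μ (ball 0 1)).toReal / 2 * r ^ finrank ℝ E) ≤
        μ (ball x r ∩ {X | ε * r < infDist X Γ}) := by
  set N := finrank ℝ E
  set b := (μ (ball (0 : E) 1)).toReal
  have hb : 0 < b := ENNReal.toReal_pos (measure_ball_pos μ 0 one_pos).ne' measure_ball_lt_top.ne
  set K := C₀ ^ 2 * 8 ^ d * 3 ^ N * b
  have hK : 0 < K := by positivity
  have hNd : 0 < (N : ℝ) - d := by linarith
  set ε := min 1 ((b / (2 * K)) ^ ((N : ℝ) - d)⁻¹)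
  have hε : 0 < ε := lt_min one_pos (by positivity)
  have hεK : K * ε ^ ((N : ℝ) - d) ≤ b / 2 := by
    have : ε ^ ((N : ℝ) - d) ≤ b / (2 * K) := by
      refine (Real.rpow_le_rpow hε.le (min_le_right _ _) hNd.le).trans_eq ?_
      rw [Real.rpow_inv_rpow (by positivity) hNd.ne']
    calc K * ε ^ ((N : ℝ) - d) ≤ K * (b / (2 * K)) := by gcongr
      _ = b / 2 := by field_simp
  refine ⟨ε, hε, fun x hx r hr => ?_⟩
  have hball : μ (ball x r) = ENNReal.ofReal (b * r ^ N) := by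
    rw [Measure.addHaar_ball_of_pos μ x hr, ← ENNReal.ofReal_toReal measure_ball_lt_top.ne,
      ← ENNReal.ofReal_mul (by positivity), mul_comm]
  have hnear :
      μ (ball x r ∩ {X | infDist X Γ ≤ ε * r}) ≤ ENNReal.ofReal (b / 2 * r ^ N) := by
    refine (addHaar_ball_inter_infDist_le μ hΓ hd₀ hC₀ hx (by positivity)
      (mul_le_of_le_one_left hr.le (min_le_left _ _))).trans (ENNReal.ofReal_le_ofReal ?_)
    calc C₀ ^ 2 * 8 ^ d * 3 ^ N * r ^ d * (ε * r) ^ ((N : ℝ) - d) * b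
        = K * ε ^ ((N : ℝ) - d) * r ^ N := by
          rw [Real.mul_rpow hε.le hr.le, ← Real.rpow_natCast r N,
            show (N : ℝ) = d + ((N : ℝ) - d) by ring, Real.rpow_add hr, add_sub_cancel_left]
          ring
      _ ≤ b / 2 * r ^ N := by gcongr
  have hsplit : μ (ball x r) ≤ μ (ball x r ∩ {X | infDist X Γ ≤ ε * r}) +
      μ (ball x r ∩ {X | ε * r < infDist X Γ}) :=
    (measure_mono fun X hX => (le_or_gt (infDist X Γ) (ε * r)).imp (⟨hX, ·⟩) (⟨hX, ·⟩)).trans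
      (measure_union_le _ _)
  have hhalf : ENNReal.ofReal (b * r ^ N) =
      ENNReal.ofReal (b / 2 * r ^ N) + ENNReal.ofReal (b / 2 * r ^ N) := by
    rw [← ENNReal.ofReal_add (by positivity) (by positivity)]
    ring_nf
  rw [hball, hhalf] at hsplit
  exact (ENNReal.add_le_add_iff_left ENNReal.ofReal_ne_top).1 (hsplit.trans (by gcongr))

theorem exists_le_setLIntegral_infDist_rpow (hΓ : AhlforsRegular d C₀ Γ) (hd₀ : 0 ≤ d)
    (hd : d < finrank ℝ E - 1) (hC₀ : 0 < C₀) :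
    ∃ c > 0, ∀ x ∈ Γ, ∀ r : ℝ, 0 < r →
      ENNReal.ofReal (c * r ^ (d + 1)) ≤
        ∫⁻ X in ball x r, ENNReal.ofReal (infDist X Γ ^ (d + 1 - finrank ℝ E)) ∂μ := by
  set N := finrank ℝ E
  have hb : 0 < (μ (ball (0 : E) 1)).toReal :=
    ENNReal.toReal_pos (measure_ball_pos μ 0 one_pos).ne' measure_ball_lt_top.ne
  obtain ⟨ε, hε, hfar⟩ := exists_le_addHaar_ball_inter_lt_infDist μ hΓ hd₀ (by linarith) hC₀
  refine ⟨(μ (ball (0 : E) 1)).toReal / 2, by positivity, fun x hx r hr => ?_⟩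
  set G := ball x r ∩ {X | ε * r < infDist X Γ}
  have hG : MeasurableSet G :=
    measurableSet_ball.inter
      (measurableSet_lt measurable_const (continuous_infDist_pt Γ).measurable)
  calc ENNReal.ofReal ((μ (ball (0 : E) 1)).toReal / 2 * r ^ (d + 1))
      = ENNReal.ofReal (r ^ (d + 1 - N)) *
          ENNReal.ofReal ((μ (ball (0 : E) 1)).toReal / 2 * r ^ N) := by
        rw [← ENNReal.ofReal_mul (by positivity), ← Real.rpow_natCast, mul_left_comm,
          ← Real.rpow_add hr]
        ring_nf
    _ ≤ ENNReal.ofReal (r ^ (d + 1 - N)) * μ G := by gcongr; exact hfar x hx r hr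
    _ = ∫⁻ _ in G, ENNReal.ofReal (r ^ (d + 1 - N)) ∂μ := (setLIntegral_const _ _).symm
    _ ≤ ∫⁻ X in G, ENNReal.ofReal (infDist X Γ ^ (d + 1 - N)) ∂μ :=
        setLIntegral_mono' hG fun X hX => ENNReal.ofReal_le_ofReal <|
          Real.rpow_le_rpow_of_nonpos ((by positivity : 0 < ε * r).trans hX.2)
            ((infDist_le_dist_of_mem hx).trans (mem_ball.1 hX.1).le) (by linarith)
    _ ≤ _ := lintegral_mono_set inter_subset_left

end Integral

end AhlforsRegular

/-- With Γ an unbounded d-AR set, d < n-1, and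
m(E) = ∫_E dist(X,Γ)^{d+1-n} dX, one has C⁻¹ r^{d+1} ≤ m(B(x,r)) ≤ C r^{d+1}
for x ∈ Γ and r > 0, with C depending only on C₀, n, d. -/
theorem weighted_measure_of_boundary_balls
    (n : ℕ) (d C₀ : ℝ) (hd₀ : 0 ≤ d) (hd : d < (n : ℝ) - 1) (hC₀ : 0 < C₀)
    (Γ : Set (EuclideanSpace ℝ (Fin n)))
    (hAR : ∀ x ∈ Γ, ∀ r : ℝ, 0 < r →
      ENNReal.ofReal (C₀⁻¹ * r ^ d) ≤ μH[d] (Γ ∩ ball x r) ∧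
      μH[d] (Γ ∩ ball x r) ≤ ENNReal.ofReal (C₀ * r ^ d))
    (m : Set (EuclideanSpace ℝ (Fin n)) → ℝ≥0∞)
    (hm : ∀ E : Set (EuclideanSpace ℝ (Fin n)),
      m E = ∫⁻ X in E, ENNReal.ofReal (Metric.infDist X Γ ^ (d + 1 - (n : ℝ))) ∂volume) :
    ∃ C : ℝ, 0 < C ∧
      ∀ x ∈ Γ, ∀ r : ℝ, 0 < r →
        ENNReal.ofReal (C⁻¹ * r ^ (d + 1)) ≤ m (ball x r) ∧
        m (ball x r) ≤ ENNReal.ofReal (C * r ^ (d + 1)) := by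
  have hΓ : AhlforsRegular d C₀ Γ := hAR
  have hn : d < finrank ℝ (EuclideanSpace ℝ (Fin n)) - 1 := by rwa [finrank_euclideanSpace_fin]
  obtain ⟨c, hc, hlower⟩ := hΓ.exists_le_setLIntegral_infDist_rpow volume hd₀ hn hC₀
  obtain ⟨C, hupper⟩ := hΓ.exists_setLIntegral_infDist_rpow_le volume hd₀ hn hC₀
  rw [finrank_euclideanSpace_fin] at hlower hupper
  refine ⟨max C c⁻¹, lt_max_of_lt_right (inv_pos.2 hc), fun x hx r hr => ?_⟩
  rw [hm]
  constructor
  · refine le_trans (ENNReal.ofReal_le_ofReal ?_) (hlower x hx r hr)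
    gcongr
    exact inv_le_of_inv_le₀ hc (le_max_right _ _)
  · refine (hupper x hx r hr).trans (ENNReal.ofReal_le_ofReal ?_)
    gcongr
    exact le_max_left _ _
end

section
/- Let 𝓛 = −div(𝓐 ∇) be an elliptic operator on ℝ^{d+1}_+ with bounded measurable real coefficients (a_{ij})_{1≤i,j≤d+1}, and define the n×n matrix A(x,t) = |t|^{d+1−n} ((a_{ij}, (t_j/|t|) a_{i(d+1)}); ((t_i/|t|) a_{(d+1)j}, a_{(d+1)(d+1)} Id)) on Ω₀ = ℝⁿ \ ℝ^d. Then A satisfies the degenerate ellipticity and boundedness conditions: A(X)ξ·ζ ≤ C₃ |t|^{d+1−n} |ξ||ζ| and A(X)ξ·ξ ≥ C₃⁻¹ |t|^{d+1−n} |ξ|² for all ξ, ζ ∈ ℝⁿ, with C₃ depending only on the ellipticity constant of 𝓐 and the dimensions. -/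
open MeasureTheory Metric Set
open scoped ENNReal

/-- The norm |t| of the last n-d coordinates of X ∈ ℝⁿ = ℝ^d × ℝ^{n-d}. -/
noncomputable def tNorm {n : ℕ} (d : ℕ) (X : EuclideanSpace ℝ (Fin n)) : ℝ :=
  Real.sqrt (∑ i : Fin n, if d ≤ (i : ℕ) then X i ^ 2 else 0)

/-- The map (x,t) ↦ (x,|t|) ∈ ℝ^{d+1}_+. -/
noncomputable def cylProj {n : ℕ} (d : ℕ) (hdn : d < n) (X : EuclideanSpace ℝ (Fin n)) :
    EuclideanSpace ℝ (Fin (d + 1)) :=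
  WithLp.toLp 2 (fun i => if h : (i : ℕ) < d then X ⟨i, h.trans hdn⟩ else tNorm d X)

/-!
Write `e = t / |t|` and split the `t`-part of `u = (uₓ, uₜ) ∈ ℝⁿ` into its radial coordinate
`⟨e, uₜ⟩` and its angular part `uₜ - ⟨e, uₜ⟩ e`. With `û = (uₓ, ⟨e, uₜ⟩) ∈ ℝ^{d+1}` one has
`|t|^{n-d-1} A(X) u · v = 𝓐(x, |t|) û · v̂ + 𝓐_{(d+1)(d+1)} ⟨angular u, angular v⟩`
and `|û|² + |angular u|² = |u|²`. Since `λ ≤ 𝓐_{(d+1)(d+1)} ≤ Λ`, the two terms together are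
elliptic with constant `λ` and bounded by `Λ`, exactly as `𝓐` is.
-/

section OrthogonalSplitting

variable {E F G : Type*} [SeminormedAddCommGroup E] [Norm F] [NormedAddCommGroup G]
  [InnerProductSpace ℝ G]

theorem mul_add_mul_le_of_sq_add_sq {x₁ x₂ y₁ y₂ r s : ℝ} (hr : 0 ≤ r) (hs : 0 ≤ s)
    (hx : x₁ ^ 2 + x₂ ^ 2 = r ^ 2) (hy : y₁ ^ 2 + y₂ ^ 2 = s ^ 2) :
    x₁ * y₁ + x₂ * y₂ ≤ r * s := by
  refine le_of_sq_le_sq ?_ (mul_nonneg hr hs)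
  rw [mul_pow, ← hx, ← hy]
  nlinarith [sq_nonneg (x₁ * y₂ - x₂ * y₁)]

theorem abs_add_mul_inner_le_of_norm_sq_add {Λ c : ℝ} (a : F → F → ℝ) (J : E → F) (K : E → G)
    (ha : ∀ y z, |a y z| ≤ Λ * ‖y‖ * ‖z‖) (hc : |c| ≤ Λ)
    (hJK : ∀ u, ‖J u‖ ^ 2 + ‖K u‖ ^ 2 = ‖u‖ ^ 2) (u v : E) :
    |a (J u) (J v) + c * inner ℝ (K u) (K v)| ≤ Λ * ‖u‖ * ‖v‖ := by
  have hΛ : 0 ≤ Λ := (abs_nonneg c).trans hc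
  have hK : |c * inner ℝ (K u) (K v)| ≤ Λ * (‖K u‖ * ‖K v‖) := by
    rw [abs_mul]
    exact mul_le_mul hc (abs_real_inner_le_norm _ _) (abs_nonneg _) hΛ
  calc |a (J u) (J v) + c * inner ℝ (K u) (K v)|
      ≤ Λ * ‖J u‖ * ‖J v‖ + Λ * (‖K u‖ * ‖K v‖) :=
        (abs_add_le _ _).trans (add_le_add (ha _ _) hK)
    _ = Λ * (‖J u‖ * ‖J v‖ + ‖K u‖ * ‖K v‖) := by ring
    _ ≤ Λ * (‖u‖ * ‖v‖) := by
      gcongr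
      exact mul_add_mul_le_of_sq_add_sq (norm_nonneg u) (norm_nonneg v) (hJK u) (hJK v)
    _ = Λ * ‖u‖ * ‖v‖ := by ring

theorem le_add_mul_inner_of_norm_sq_add {lam c : ℝ} (a : F → F → ℝ) (J : E → F) (K : E → G)
    (ha : ∀ y, lam * ‖y‖ ^ 2 ≤ a y y) (hc : lam ≤ c)
    (hJK : ∀ u, ‖J u‖ ^ 2 + ‖K u‖ ^ 2 = ‖u‖ ^ 2) (u : E) :
    lam * ‖u‖ ^ 2 ≤ a (J u) (J u) + c * inner ℝ (K u) (K u) := by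
  rw [real_inner_self_eq_norm_sq, ← hJK u, mul_add]
  exact add_le_add (ha _) (mul_le_mul_of_nonneg_right hc (sq_nonneg _))

theorem real_inner_sub_smul_sub_smul {e : G} (he : ‖e‖ = 1) (x y : G) :
    inner ℝ (x - inner ℝ e x • e) (y - inner ℝ e y • e) =
      inner ℝ x y - inner ℝ e x * inner ℝ e y := by
  simp only [inner_sub_left, inner_sub_right, real_inner_smul_left, real_inner_smul_right,
    real_inner_self_eq_norm_sq, he, real_inner_comm e]
  ring

end OrthogonalSplitting

section MatrixBilin

variable {ι : Type*} [Fintype ι]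

def matrixBilin (a : Matrix ι ι ℝ) (u v : EuclideanSpace ℝ ι) : ℝ := ∑ i, ∑ j, a i j * u j * v i

theorem matrixBilin_single [DecidableEq ι] (a : Matrix ι ι ℝ) (i : ι) :
    matrixBilin a (EuclideanSpace.single i 1) (EuclideanSpace.single i 1) = a i i := by
  simp [matrixBilin]

theorem le_diag_of_le_matrixBilin [DecidableEq ι] {lam : ℝ} {a : Matrix ι ι ℝ}
    (ha : ∀ ξ, lam * ‖ξ‖ ^ 2 ≤ matrixBilin a ξ ξ) (i : ι) : lam ≤ a i i := by
  simpa [matrixBilin_single] using ha (EuclideanSpace.single i 1)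

theorem abs_diag_le_of_abs_matrixBilin_le [DecidableEq ι] {Λ : ℝ} {a : Matrix ι ι ℝ}
    (ha : ∀ ξ ζ, |matrixBilin a ξ ζ| ≤ Λ * ‖ξ‖ * ‖ζ‖) (i : ι) : |a i i| ≤ Λ := by
  simpa [matrixBilin_single] using ha (EuclideanSpace.single i 1) (EuclideanSpace.single i 1)

end MatrixBilin

noncomputable section Cylindrical

variable {k : ℕ} (d : ℕ)

def tPart (u : EuclideanSpace ℝ (Fin (d + k))) : EuclideanSpace ℝ (Fin k) :=
  WithLp.toLp 2 fun r => u (Fin.natAdd d r)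

def tDir (X : EuclideanSpace ℝ (Fin (d + k))) : EuclideanSpace ℝ (Fin k) :=
  ‖tPart d X‖⁻¹ • tPart d X

def cylPart (X u : EuclideanSpace ℝ (Fin (d + k))) : EuclideanSpace ℝ (Fin (d + 1)) :=
  WithLp.toLp 2
    (Fin.snoc (fun p : Fin d => u (Fin.castAdd k p)) (inner ℝ (tDir d X) (tPart d u)))

def angularPart (X u : EuclideanSpace ℝ (Fin (d + k))) : EuclideanSpace ℝ (Fin k) :=
  tPart d u - inner ℝ (tDir d X) (tPart d u) • tDir d X

theorem norm_sq_eq_sum_castAdd_add_norm_sq_tPart (u : EuclideanSpace ℝ (Fin (d + k))) :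
    ‖u‖ ^ 2 = ∑ p : Fin d, u (Fin.castAdd k p) ^ 2 + ‖tPart d u‖ ^ 2 := by
  simp [EuclideanSpace.norm_sq_eq, Fin.sum_univ_add, tPart]

theorem tNorm_eq_norm_tPart (X : EuclideanSpace ℝ (Fin (d + k))) : tNorm d X = ‖tPart d X‖ := by
  rw [tNorm, EuclideanSpace.norm_eq, Fin.sum_univ_add,
    Finset.sum_eq_zero fun p _ => if_neg (not_le.mpr p.isLt)]
  simp [tPart]

theorem norm_tDir {X : EuclideanSpace ℝ (Fin (d + k))} (hX : tNorm d X ≠ 0) : ‖tDir d X‖ = 1 := by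
  rw [tNorm_eq_norm_tPart] at hX
  exact norm_smul_inv_norm (norm_ne_zero_iff.mp hX)

theorem norm_sq_cylPart_add_norm_sq_angularPart {X : EuclideanSpace ℝ (Fin (d + k))}
    (hX : tNorm d X ≠ 0) (u : EuclideanSpace ℝ (Fin (d + k))) :
    ‖cylPart d X u‖ ^ 2 + ‖angularPart d X u‖ ^ 2 = ‖u‖ ^ 2 := by
  rw [← real_inner_self_eq_norm_sq (angularPart d X u), angularPart,
    real_inner_sub_smul_sub_smul (norm_tDir d hX), real_inner_self_eq_norm_sq,
    norm_sq_eq_sum_castAdd_add_norm_sq_tPart d u, EuclideanSpace.norm_sq_eq,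
    Fin.sum_univ_castSucc]
  simp only [cylPart, Fin.snoc_castSucc, Real.norm_eq_abs, sq_abs, Fin.snoc_last]
  ring

def blockMatrix {n : ℕ} (d : ℕ) (a : Matrix (Fin (d + 1)) (Fin (d + 1)) ℝ)
    (X : EuclideanSpace ℝ (Fin n)) : Matrix (Fin n) (Fin n) ℝ := fun i j =>
  if hi : (i : ℕ) < d then
    (if hj : (j : ℕ) < d then a ⟨i, Nat.lt_succ_of_lt hi⟩ ⟨j, Nat.lt_succ_of_lt hj⟩
    else (X j / tNorm d X) * a ⟨i, Nat.lt_succ_of_lt hi⟩ (Fin.last d))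
  else
    (if hj : (j : ℕ) < d then (X i / tNorm d X) * a (Fin.last d) ⟨j, Nat.lt_succ_of_lt hj⟩
    else a (Fin.last d) (Fin.last d) * (if i = j then 1 else 0))

theorem matrixBilin_blockMatrix {X : EuclideanSpace ℝ (Fin (d + k))} (hX : tNorm d X ≠ 0)
    (a : Matrix (Fin (d + 1)) (Fin (d + 1)) ℝ) (u v : EuclideanSpace ℝ (Fin (d + k))) :
    matrixBilin (blockMatrix d a X) u v =
      matrixBilin a (cylPart d X u) (cylPart d X v) +
        a (Fin.last d) (Fin.last d) * inner ℝ (angularPart d X u) (angularPart d X v) := by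
  have hcast : ∀ (p : Fin d) (h : (p : ℕ) < d + 1), (⟨p, h⟩ : Fin (d + 1)) = p.castSucc :=
    fun _ _ => rfl
  rw [angularPart, angularPart, real_inner_sub_smul_sub_smul (norm_tDir d hX)]
  simp only [matrixBilin, blockMatrix, tNorm_eq_norm_tPart, tPart, mul_ite, mul_one, mul_zero,
    dite_mul, ite_mul, zero_mul, Finset.sum_dite_irrel, Fin.sum_univ_add, Fin.val_castAdd,
    Fin.is_lt, ↓reduceDIte, hcast, Fin.val_natAdd, add_lt_iff_neg_left, not_lt_zero,
    Fin.natAdd_inj, Finset.sum_ite_eq, Finset.mem_univ, ↓reduceIte, cylPart, tDir,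
    PiLp.inner_apply, PiLp.smul_apply, smul_eq_mul, RCLike.inner_apply, Real.ringHom_apply,
    Fin.sum_univ_castSucc, Fin.snoc_castSucc, Fin.snoc_last]
  simp only [mul_sub, Finset.mul_sum, Finset.sum_mul, Finset.sum_add_distrib]
  rw [Finset.sum_comm (s := (Finset.univ : Finset (Fin k)))
    (t := (Finset.univ : Finset (Fin d)))]
  ring_nf
  ac_rfl

end Cylindrical

/-- The block matrix A built out of an elliptic matrix 𝓐 on ℝ^{d+1}_+
satisfies the degenerate ellipticity and boundedness conditions with weight |t|^{d+1-n}. -/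
theorem block_matrix_degenerate_elliptic
    (n d : ℕ) (hdn : d + 1 < n) (lam Lam : ℝ) (hlam : 0 < lam)
    (𝓐 : EuclideanSpace ℝ (Fin (d + 1)) → Matrix (Fin (d + 1)) (Fin (d + 1)) ℝ)
    (hell : ∀ y, ∀ ξ ζ : EuclideanSpace ℝ (Fin (d + 1)),
      lam * ‖ξ‖ ^ 2 ≤ ∑ i, ∑ j, 𝓐 y i j * ξ j * ξ i ∧
      |∑ i, ∑ j, 𝓐 y i j * ξ j * ζ i| ≤ Lam * ‖ξ‖ * ‖ζ‖)
    (A : EuclideanSpace ℝ (Fin n) → Matrix (Fin n) (Fin n) ℝ)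
    (hA : ∀ X : EuclideanSpace ℝ (Fin n), tNorm d X ≠ 0 → ∀ i j : Fin n,
      A X i j = tNorm d X ^ ((d : ℝ) + 1 - n) *
        (if hi : (i : ℕ) < d then
          (if hj : (j : ℕ) < d then
            𝓐 (cylProj d (by omega) X) ⟨i, by omega⟩ ⟨j, by omega⟩
          else (X j / tNorm d X) * 𝓐 (cylProj d (by omega) X) ⟨i, by omega⟩ (Fin.last d))
        else
          (if hj : (j : ℕ) < d then
            (X i / tNorm d X) * 𝓐 (cylProj d (by omega) X) (Fin.last d) ⟨j, by omega⟩
          else 𝓐 (cylProj d (by omega) X) (Fin.last d) (Fin.last d) *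
            (if i = j then 1 else 0)))) :
    ∃ C₃ : ℝ, 0 < C₃ ∧
      ∀ X : EuclideanSpace ℝ (Fin n), tNorm d X ≠ 0 →
        ∀ ξ ζ : EuclideanSpace ℝ (Fin n),
          |∑ i, ∑ j, A X i j * ξ j * ζ i| ≤
              C₃ * tNorm d X ^ ((d : ℝ) + 1 - n) * ‖ξ‖ * ‖ζ‖ ∧
          C₃⁻¹ * tNorm d X ^ ((d : ℝ) + 1 - n) * ‖ξ‖ ^ 2 ≤
              ∑ i, ∑ j, A X i j * ξ j * ξ i := by
  -- writing `n = d + k` lets `Fin n` split as `Fin d ⊕ Fin k` in sums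
  obtain ⟨k, rfl⟩ := Nat.exists_eq_add_of_le (d.le_succ.trans hdn.le)
  refine ⟨max Lam lam⁻¹, lt_max_of_lt_right (inv_pos.mpr hlam), fun X hX ξ ζ => ?_⟩
  set a := 𝓐 (cylProj d (by omega) X)
  set w := tNorm d X ^ ((d : ℝ) + 1 - (d + k : ℕ))
  have hw : 0 < w := Real.rpow_pos_of_pos ((Real.sqrt_nonneg _).lt_of_ne' hX) _
  have hAX : ∀ u v, matrixBilin (A X) u v = w * matrixBilin (blockMatrix d a X) u v := by
    intro u v
    simp only [matrixBilin, Finset.mul_sum, hA X hX, blockMatrix, mul_assoc]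
    rfl
  have hlo : ∀ ξ, lam * ‖ξ‖ ^ 2 ≤ matrixBilin a ξ ξ := fun ξ => (hell _ ξ ξ).1
  have hup : ∀ ξ ζ, |matrixBilin a ξ ζ| ≤ Lam * ‖ξ‖ * ‖ζ‖ := fun ξ ζ => (hell _ ξ ζ).2
  have hsplit := norm_sq_cylPart_add_norm_sq_angularPart d hX
  change |matrixBilin (A X) ξ ζ| ≤ _ ∧ _ ≤ matrixBilin (A X) ξ ξ
  rw [hAX, hAX, matrixBilin_blockMatrix d hX, matrixBilin_blockMatrix d hX]
  constructor
  · have hB := abs_add_mul_inner_le_of_norm_sq_add (matrixBilin a) _ _ hup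
      (abs_diag_le_of_abs_matrixBilin_le hup (Fin.last d)) hsplit ξ ζ
    rw [abs_mul, abs_of_pos hw]
    calc w * _ ≤ w * (Lam * ‖ξ‖ * ‖ζ‖) := by gcongr
      _ ≤ max Lam lam⁻¹ * w * ‖ξ‖ * ‖ζ‖ := by
        rw [mul_comm (max _ _), mul_assoc w, mul_assoc w]
        gcongr
        exact le_max_left _ _
  · have hB := le_add_mul_inner_of_norm_sq_add (matrixBilin a) _ _ hlo
      (le_diag_of_le_matrixBilin hlo (Fin.last d)) hsplit ξ
    have hC : (max Lam lam⁻¹)⁻¹ ≤ lam := inv_le_of_inv_le₀ hlam (le_max_right _ _)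
    calc (max Lam lam⁻¹)⁻¹ * w * ‖ξ‖ ^ 2 ≤ w * (lam * ‖ξ‖ ^ 2) := by
          rw [mul_comm _ w, mul_assoc]
          gcongr
      _ ≤ w * _ := by gcongr
end
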